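/- arXiv:1211.4390 — 8 statements merged into one kernel-verified Lean document; each statement's English description precedes it below -/
import Mathlib

section
/- Let 1 ≤ p < ∞ and let B denote the backward shift on the complex Banach space ℓ^p(ℕ) of p-summable complex sequences, defined by B(x₀,x₁,x₂,…) = (x₁,x₂,x₃,…). For λ ∈ ℂ, the operator λB is hypercyclic on ℓ^p(ℕ) if and only if |λ| > 1. -/
/-!
If `‖λ‖ ≤ 1` then `λB` is a contraction, so all its orbits are bounded. If `‖λ‖ > 1`, every
finitely supported sequence `y` is killed by `(λB)ⁿ` for large `n`, and is the image under `(λB)ⁿ`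
of `λ⁻ⁿ Sⁿ y` (with `S` the forward shift), which tends to `0`. For `x` and `y` finitely
supported, `x + λ⁻ⁿ Sⁿ y` is then close to `x` and is mapped close to `y` by `(λB)ⁿ`; since
`ℓ^p` is a separable Banach space, a Baire category argument turns this transitivity into a
dense orbit.
-/

open Filter Topology ENNReal

/-- A continuous linear operator `T` is hypercyclic if some vector has dense orbit. -/
def Hypercyclic {𝕜 X : Type*} [Semiring 𝕜] [TopologicalSpace X] [AddCommMonoid X]
    [Module 𝕜 X] (T : X →L[𝕜] X) : Prop :=
  ∃ x : X, Dense (Set.range fun n : ℕ => (T ^ n) x)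

open Set Function TopologicalSpace

section Dynamics

variable {X : Type*} [TopologicalSpace X]

/-- Birkhoff's transitivity theorem. -/
theorem exists_dense_orbit_of_dense_iUnion_preimage [BaireSpace X] [SecondCountableTopology X]
    [Nonempty X] {f : X → X} (hf : Continuous f)
    (h : ∀ U : Set X, IsOpen U → U.Nonempty → Dense (⋃ n : ℕ, f^[n] ⁻¹' U)) :
    ∃ x, Dense (range fun n : ℕ => f^[n] x) := by
  obtain ⟨b, hbc, hb0, hb⟩ := exists_countable_basis X
  have hG : Dense (⋂ U ∈ b, ⋃ n : ℕ, f^[n] ⁻¹' U) :=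
    dense_biInter_of_isOpen
      (fun U hU => isOpen_iUnion fun n => (hb.isOpen hU).preimage (hf.iterate n)) hbc
      (fun U hU => h U (hb.isOpen hU) (nonempty_iff_ne_empty.2 (ne_of_mem_of_not_mem hU hb0)))
  obtain ⟨x, hx⟩ := hG.nonempty
  refine ⟨x, hb.dense_iff.2 fun U hU _ => ?_⟩
  obtain ⟨n, hn⟩ := mem_iUnion.1 (mem_iInter₂.1 hx U hU)
  exact ⟨_, hn, n, rfl⟩

end Dynamics

section Criterion

variable {𝕜 E : Type*} [Semiring 𝕜] [AddCommMonoid E] [TopologicalSpace E] [ContinuousAdd E]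
  [Module 𝕜 E]

/-- The Kitai–Gethner–Shapiro hypercyclicity criterion. -/
theorem hypercyclic_of_dense_of_tendsto_zero [BaireSpace E] [SecondCountableTopology E]
    (T : E →L[𝕜] E) {D : Set E} (hD : Dense D)
    (hT : ∀ x ∈ D, Tendsto (fun n => (T ^ n) x) atTop (𝓝 0))
    (hS : ∀ y ∈ D, ∃ u : ℕ → E, Tendsto u atTop (𝓝 0) ∧ ∀ n, (T ^ n) (u n) = y) :
    Hypercyclic T := by
  have : Nonempty E := ⟨0⟩
  simp only [Hypercyclic, FunLike.coe_pow_eq_iterate]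
  refine exists_dense_orbit_of_dense_iUnion_preimage T.continuous fun V hV hVne => ?_
  refine dense_iff_inter_open.2 fun U hU hUne => ?_
  obtain ⟨x, hxU, hxD⟩ := hD.inter_open_nonempty U hU hUne
  obtain ⟨y, hyV, hyD⟩ := hD.inter_open_nonempty V hV hVne
  obtain ⟨u, hu, hTu⟩ := hS y hyD
  have hxu : Tendsto (fun n => x + u n) atTop (𝓝 x) := by
    simpa using tendsto_const_nhds.add hu
  have hTxu : Tendsto (fun n => (T ^ n) (x + u n)) atTop (𝓝 y) := by
    simpa only [map_add, hTu, zero_add] using (hT x hxD).add_const y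
  obtain ⟨n, hnU, hnV⟩ :=
    ((hxu.eventually_mem (hU.mem_nhds hxU)).and (hTxu.eventually_mem (hV.mem_nhds hyV))).exists
  exact ⟨x + u n, hnU, mem_iUnion.2 ⟨n, by rwa [← FunLike.coe_pow_eq_iterate]⟩⟩

variable (T : E →L[𝕜] E) {s : Set E}

theorem tendsto_pow_apply_zero_of_mem_closure
    (hs : ∀ x ∈ s, Tendsto (fun n => (T ^ n) x) atTop (𝓝 0)) {x : E}
    (hx : x ∈ AddSubmonoid.closure s) :
    Tendsto (fun n => (T ^ n) x) atTop (𝓝 0) := by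
  induction hx using AddSubmonoid.closure_induction with
  | mem x hx => exact hs x hx
  | zero => simpa using tendsto_const_nhds
  | add x y _ _ hx hy => simpa using hx.add hy

theorem exists_tendsto_zero_pow_apply_eq_of_mem_closure
    (hs : ∀ y ∈ s, ∃ u : ℕ → E, Tendsto u atTop (𝓝 0) ∧ ∀ n, (T ^ n) (u n) = y)
    {y : E} (hy : y ∈ AddSubmonoid.closure s) :
    ∃ u : ℕ → E, Tendsto u atTop (𝓝 0) ∧ ∀ n, (T ^ n) (u n) = y := by
  induction hy using AddSubmonoid.closure_induction with
  | mem y hy => exact hs y hy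
  | zero => exact ⟨0, tendsto_const_nhds, by simp⟩
  | add x y _ _ hx hy =>
    obtain ⟨u, hu, hTu⟩ := hx
    obtain ⟨v, hv, hTv⟩ := hy
    exact ⟨fun n => u n + v n, by simpa using hu.add hv, fun n => by rw [map_add, hTu, hTv]⟩

end Criterion

theorem not_hypercyclic_of_norm_le_one {𝕜 E : Type*} [NontriviallyNormedField 𝕜]
    [NormedAddCommGroup E] [NormedSpace 𝕜 E] [Nontrivial E] {T : E →L[𝕜] E} (hT : ‖T‖ ≤ 1) :
    ¬Hypercyclic T := by
  rintro ⟨x, hx⟩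
  have horbit : range (fun n : ℕ => (T ^ n) x) ⊆ Metric.closedBall 0 ‖x‖ := by
    rintro _ ⟨n, rfl⟩
    rw [mem_closedBall_zero_iff]
    calc ‖(T ^ n) x‖ ≤ ‖T ^ n‖ * ‖x‖ := (T ^ n).le_opNorm x
      _ ≤ ‖T‖ ^ n * ‖x‖ := by gcongr; exact norm_pow_le T n
      _ ≤ ‖x‖ := mul_le_of_le_one_left (norm_nonneg x) (pow_le_one₀ (norm_nonneg T) hT)
  have hbounded : Bornology.IsBounded (univ : Set E) := by
    rw [← hx.closure_eq]
    exact Metric.isBounded_closedBall.subset (closure_minimal horbit Metric.isClosed_closedBall)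
  exact NormedSpace.unbounded_univ 𝕜 E hbounded

namespace lp

variable {α E : Type*} [NormedAddCommGroup E] {p : ℝ≥0∞}

instance [Nonempty α] [Nontrivial E] : Nontrivial (lp (fun _ : α => E) p) := by
  classical
  obtain ⟨i⟩ := ‹Nonempty α›
  obtain ⟨a, ha⟩ := exists_ne (0 : E)
  exact nontrivial_of_ne (lp.single p i a) 0 fun h => ha <| by
    simpa using congr_arg (· i) h

variable [Fact (1 ≤ p)]

theorem norm_le_of_forall_apply_eq_comp {β : Type*} (hp : 0 < p.toReal) {e : α → β}
    (he : Injective e) {x : lp (fun _ : β => E) p} {y : lp (fun _ : α => E) p}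
    (hxy : ∀ i, y i = x (e i)) : ‖y‖ ≤ ‖x‖ :=
  lp.norm_le_of_forall_sum_le hp (norm_nonneg x) fun s =>
    calc ∑ i ∈ s, ‖y i‖ ^ p.toReal = ∑ j ∈ s.map ⟨e, he⟩, ‖x j‖ ^ p.toReal := by simp [hxy]
      _ ≤ ‖x‖ ^ p.toReal := lp.sum_rpow_le_norm_rpow hp x _

theorem dense_addSubmonoidClosure_range_single [DecidableEq α] (hp : p ≠ ∞) :
    Dense (AddSubmonoid.closure (⋃ i, range (lp.single (E := fun _ : α => E) p i)) :
      Set (lp (fun _ : α => E) p)) := fun f =>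
  mem_closure_of_tendsto (lp.hasSum_single hp f) <| Eventually.of_forall fun _ =>
    sum_mem fun i _ => AddSubmonoid.subset_closure (mem_iUnion.2 ⟨i, mem_range_self _⟩)

theorem separableSpace [Countable α] [SeparableSpace E] (hp : p ≠ ∞) :
    SeparableSpace (lp (fun _ : α => E) p) := by
  classical
  rw [← isSeparable_univ_iff, ← (dense_addSubmonoidClosure_range_single hp).closure_eq,
    ← Submodule.span_nat_eq_addSubmonoidClosure]
  exact (IsSeparable.iUnion fun i => isSeparable_range (isometry_single i).continuous).span.closure

end lp

section BackwardShift

variable {𝕜 E : Type*} [NontriviallyNormedField 𝕜] [NormedAddCommGroup E] [NormedSpace 𝕜 E]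
  {p : ℝ≥0∞} [Fact (1 ≤ p)] {B : lp (fun _ : ℕ => E) p →L[𝕜] lp (fun _ : ℕ => E) p}

theorem backwardShift_single_zero
    (hB : ∀ (x : lp (fun _ : ℕ => E) p) (n : ℕ), B x n = x (n + 1)) (a : E) :
    B (lp.single p 0 a) = 0 := by
  ext n
  simp [hB]

theorem backwardShift_single_succ
    (hB : ∀ (x : lp (fun _ : ℕ => E) p) (n : ℕ), B x n = x (n + 1)) (k : ℕ) (a : E) :
    B (lp.single p (k + 1) a) = lp.single p k a := by
  ext n
  simp [hB, Pi.single_apply]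

theorem backwardShift_pow_single_add
    (hB : ∀ (x : lp (fun _ : ℕ => E) p) (n : ℕ), B x n = x (n + 1)) (k n : ℕ) (a : E) :
    (B ^ n) (lp.single p (k + n) a) = lp.single p k a := by
  induction n with
  | zero => rfl
  | succ n ih =>
    rw [pow_succ, mul_apply_eq_comp, ← add_assoc, backwardShift_single_succ hB, ih]

theorem backwardShift_pow_single_of_lt
    (hB : ∀ (x : lp (fun _ : ℕ => E) p) (n : ℕ), B x n = x (n + 1)) {k n : ℕ} (h : k < n)
    (a : E) : (B ^ n) (lp.single p k a) = 0 := by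
  obtain ⟨m, rfl⟩ := Nat.exists_eq_add_of_lt h
  have hk : (B ^ k) (lp.single p k a) = lp.single p 0 a := by
    simpa only [zero_add] using backwardShift_pow_single_add hB 0 k a
  rw [show k + m + 1 = m + 1 + k by omega, pow_add, mul_apply_eq_comp, hk, pow_succ,
    mul_apply_eq_comp, backwardShift_single_zero hB, map_zero]

theorem norm_backwardShift_le (hp : p ≠ ∞)
    (hB : ∀ (x : lp (fun _ : ℕ => E) p) (n : ℕ), B x n = x (n + 1)) : ‖B‖ ≤ 1 := by
  have hp' : 0 < p.toReal := ENNReal.toReal_pos (zero_lt_one.trans_le Fact.out).ne' hp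
  refine B.opNorm_le_bound zero_le_one fun x => ?_
  rw [one_mul]
  exact lp.norm_le_of_forall_apply_eq_comp hp' (add_left_injective 1) (hB x)

theorem not_hypercyclic_smul_backwardShift [Nontrivial E] (hp : p ≠ ∞)
    (hB : ∀ (x : lp (fun _ : ℕ => E) p) (n : ℕ), B x n = x (n + 1)) {c : 𝕜} (hc : ‖c‖ ≤ 1) :
    ¬Hypercyclic (c • B) :=
  not_hypercyclic_of_norm_le_one <|
    (norm_smul_le c B).trans (mul_le_one₀ hc (norm_nonneg B) (norm_backwardShift_le hp hB))

theorem hypercyclic_smul_backwardShift [CompleteSpace E] [SeparableSpace E] (hp : p ≠ ∞)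
    (hB : ∀ (x : lp (fun _ : ℕ => E) p) (n : ℕ), B x n = x (n + 1)) {c : 𝕜} (hc : 1 < ‖c‖) :
    Hypercyclic (c • B) := by
  have := lp.separableSpace (α := ℕ) (E := E) hp
  have := UniformSpace.secondCountable_of_separable (lp (fun _ : ℕ => E) p)
  have hc₀ : c ≠ 0 := norm_pos_iff.1 (one_pos.trans hc)
  refine hypercyclic_of_dense_of_tendsto_zero _ (lp.dense_addSubmonoidClosure_range_single hp)
    (fun x hx => tendsto_pow_apply_zero_of_mem_closure _ ?_ hx)
    (fun y hy => exists_tendsto_zero_pow_apply_eq_of_mem_closure _ ?_ hy)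
  · intro x hx
    obtain ⟨k, a, rfl⟩ := mem_iUnion.1 hx
    refine tendsto_const_nhds.congr' <| (eventually_gt_atTop k).mono fun n hn => ?_
    dsimp only
    rw [smul_pow, smul_apply, backwardShift_pow_single_of_lt hB hn, smul_zero]
  · intro y hy
    obtain ⟨k, a, rfl⟩ := mem_iUnion.1 hy
    refine ⟨fun n => c⁻¹ ^ n • lp.single p (k + n) a, ?_, fun n => ?_⟩
    · rw [tendsto_zero_iff_norm_tendsto_zero]
      simp only [norm_smul, norm_pow, norm_inv, lp.norm_single (zero_lt_one.trans_le Fact.out)]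
      simpa using (tendsto_pow_atTop_nhds_zero_of_lt_one (by positivity)
        (inv_lt_one_of_one_lt₀ hc)).mul_const ‖a‖
    · rw [smul_pow, smul_apply, map_smul, backwardShift_pow_single_add hB, smul_smul, ← mul_pow,
        mul_inv_cancel₀ hc₀, one_pow, one_smul]

end BackwardShift

/-- For `1 ≤ p < ∞` and `B` the backward shift on `ℓ^p(ℕ)` over `ℂ`, the operator
`λ • B` is hypercyclic if and only if `|λ| > 1`. -/
theorem smul_backwardShift_hypercyclic_iff (p : ℝ≥0∞) [Fact (1 ≤ p)] (hp : p ≠ ∞)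
    (B : lp (fun _ : ℕ => ℂ) p →L[ℂ] lp (fun _ : ℕ => ℂ) p)
    (hB : ∀ (x : lp (fun _ : ℕ => ℂ) p) (n : ℕ), (B x) n = x (n + 1))
    (lam : ℂ) :
    Hypercyclic (lam • B) ↔ 1 < ‖lam‖ :=
  ⟨fun h => not_le.1 fun hlam => not_hypercyclic_smul_backwardShift hp hB hlam h,
    hypercyclic_smul_backwardShift hp hB⟩
end

section
/- Let T be an invertible bounded linear operator on a separable Banach space X (so T⁻¹ is also a bounded linear operator). Then T is hypercyclic if and only if T⁻¹ is hypercyclic. -/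
open Filter Topology

/-- Powers of a continuous linear map applied: inverse powers undo powers. -/
lemma symm_pow_apply_pow_apply {𝕜 X : Type*} [RCLike 𝕜] [NormedAddCommGroup X]
    [NormedSpace 𝕜 X] (T : X ≃L[𝕜] X) (n : ℕ) (v : X) :
    ((T.symm : X →L[𝕜] X) ^ n) (((T : X →L[𝕜] X) ^ n) v) = v := by
  induction n generalizing v with
  | zero => simp
  | succ n ih =>
      rw [pow_succ (T : X →L[𝕜] X), pow_succ' (T.symm : X →L[𝕜] X)]
      simp only [ContinuousLinearMap.mul_apply]
      rw [ih, ContinuousLinearEquiv.coe_coe, ContinuousLinearEquiv.coe_coe,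
        T.symm_apply_apply]

/-- Topological transitivity from hypercyclicity (nontrivial space). -/
lemma transitive_of_hypercyclic {𝕜 X : Type*} [RCLike 𝕜] [NormedAddCommGroup X]
    [NormedSpace 𝕜 X] [Nontrivial X] (S : X →L[𝕜] X)
    (h : Hypercyclic S) {U V : Set X} (hU : IsOpen U) (hUne : U.Nonempty)
    (hV : IsOpen V) (hVne : V.Nonempty) :
    ∃ u ∈ U, ∃ n : ℕ, (S ^ n) u ∈ V := by
  obtain ⟨x, hx⟩ := h
  haveI : ∀ y : X, NeBot (𝓝[≠] y) := fun y => Module.punctured_nhds_neBot 𝕜 X y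
  -- find m with S^m x ∈ U
  obtain ⟨-, hmU, ⟨m, rfl⟩⟩ := hx.inter_open_nonempty U hU hUne
  -- tail of the orbit is dense
  have htail : Dense (Set.range fun k : ℕ => (S ^ (m + k)) x) := by
    have hfin : (Set.range fun j : Fin m => (S ^ (j : ℕ)) x).Finite :=
      Set.finite_range _
    have hd := hx.diff_finite hfin
    refine hd.mono ?_
    rintro - ⟨⟨n, rfl⟩, hne⟩
    rcases le_or_gt m n with hmn | hmn
    · exact ⟨n - m, by simp only []; rw [Nat.add_sub_cancel' hmn]⟩
    · exact absurd ⟨⟨n, hmn⟩, rfl⟩ hne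
  obtain ⟨-, hkV, ⟨k, rfl⟩⟩ := htail.inter_open_nonempty V hV hVne
  refine ⟨(S ^ m) x, hmU, k, ?_⟩
  rw [← ContinuousLinearMap.mul_apply, ← pow_add, add_comm]
  exact hkV

/-- Birkhoff transitivity theorem: transitivity implies hypercyclicity. -/
lemma hypercyclic_of_transitive {𝕜 X : Type*} [RCLike 𝕜] [NormedAddCommGroup X]
    [NormedSpace 𝕜 X] [CompleteSpace X] [TopologicalSpace.SeparableSpace X]
    (S : X →L[𝕜] X)
    (h : ∀ U V : Set X, IsOpen U → U.Nonempty → IsOpen V → V.Nonempty →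
      ∃ u ∈ U, ∃ n : ℕ, (S ^ n) u ∈ V) :
    Hypercyclic S := by
  haveI : SecondCountableTopology X :=
    UniformSpace.secondCountable_of_separable X
  obtain ⟨b, hbc, hbne, hb⟩ := TopologicalSpace.exists_countable_basis X
  set G : Set X → Set X := fun V => ⋃ n : ℕ, (fun y => (S ^ n) y) ⁻¹' V with hG
  have hGopen : ∀ V ∈ b, IsOpen (G V) := fun V hV =>
    isOpen_iUnion fun n => (hb.isOpen hV).preimage (S ^ n).continuous
  have hGdense : ∀ V ∈ b, Dense (G V) := by
    intro V hV
    rw [dense_iff_inter_open]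
    intro U hU hUne
    have hVne : V.Nonempty := by
      rcases Set.eq_empty_or_nonempty V with rfl | hne
      · exact absurd hV hbne
      · exact hne
    obtain ⟨u, hu, n, hn⟩ := h U V hU hUne (hb.isOpen hV) hVne
    exact ⟨u, hu, Set.mem_iUnion.2 ⟨n, hn⟩⟩
  have hdense : Dense (⋂ V ∈ b, G V) :=
    dense_biInter_of_isOpen hGopen hbc hGdense
  obtain ⟨x, hx⟩ := hdense.nonempty
  refine ⟨x, hb.dense_iff.2 fun o ho hone => ?_⟩
  have hxo : x ∈ G o := by
    have := Set.mem_iInter₂.1 hx o ho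
    exact this
  obtain ⟨n, hn⟩ := Set.mem_iUnion.1 hxo
  exact ⟨(S ^ n) x, hn, ⟨n, rfl⟩⟩

lemma hypercyclic_symm_of_hypercyclic {𝕜 X : Type*} [RCLike 𝕜]
    [NormedAddCommGroup X] [NormedSpace 𝕜 X] [CompleteSpace X]
    [TopologicalSpace.SeparableSpace X] (T : X ≃L[𝕜] X)
    (h : Hypercyclic (T : X →L[𝕜] X)) : Hypercyclic (T.symm : X →L[𝕜] X) := by
  rcases subsingleton_or_nontrivial X with hs | hn
  · refine ⟨0, ?_⟩
    intro y
    have : y ∈ Set.range fun n : ℕ => ((T.symm : X →L[𝕜] X) ^ n) 0 :=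
      ⟨0, Subsingleton.elim _ _⟩
    exact subset_closure this
  · apply hypercyclic_of_transitive
    intro U V hU hUne hV hVne
    obtain ⟨v, hv, n, hn⟩ := transitive_of_hypercyclic (T : X →L[𝕜] X) h hV hVne hU hUne
    refine ⟨((T : X →L[𝕜] X) ^ n) v, hn, n, ?_⟩
    rw [symm_pow_apply_pow_apply]
    exact hv

/-- An invertible bounded linear operator on a separable Banach space is hypercyclic
iff its inverse is hypercyclic. -/
theorem hypercyclic_iff_hypercyclic_inv {𝕜 X : Type*} [RCLike 𝕜]
    [NormedAddCommGroup X] [NormedSpace 𝕜 X] [CompleteSpace X]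
    [TopologicalSpace.SeparableSpace X] (T : X ≃L[𝕜] X) :
    Hypercyclic (T : X →L[𝕜] X) ↔ Hypercyclic (T.symm : X →L[𝕜] X) := by
  constructor
  · exact hypercyclic_symm_of_hypercyclic T
  · intro h
    have := hypercyclic_symm_of_hypercyclic T.symm h
    rwa [ContinuousLinearEquiv.symm_symm] at this
end

section
/- If E is a finite-dimensional normed space over ℝ or ℂ with dim E ≥ 1, then no continuous linear operator on E is hypercyclic. -/
open Filter Topology

/-!
If the orbit of `x` is dense, it spans `E`, so some orbit vectors `T^{N i} x` form a basis `b`.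
The function `L y = det_b (T^{N i} y)ᵢ` is continuous, homogeneous of degree `d = dim E`,
satisfies `L ∘ T = det T • L` and `L x = 1`. Hence `L` maps the orbit of `x` onto the powers of
`det T`, and `L (t • x) = t ^ d` would lie in their closure for every scalar `t`. But the powers
of a scalar all lie in the closed unit disc or all outside the open one, and `t ^ d` can be
chosen on the other side.
-/

universe u

theorem exists_pow_notMem_closure_range_pow {𝕜 : Type*} [NontriviallyNormedField 𝕜]
    (a : 𝕜) {d : ℕ} (hd : d ≠ 0) : ∃ t : 𝕜, t ^ d ∉ closure (Set.range (a ^ · : ℕ → 𝕜)) := by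
  obtain ⟨c, hc⟩ := NormedField.exists_one_lt_norm 𝕜
  rcases le_total ‖a‖ 1 with ha | ha
  · refine ⟨c, fun hmem => ?_⟩
    have hball : Set.range (a ^ · : ℕ → 𝕜) ⊆ Metric.closedBall 0 1 := by
      rintro _ ⟨n, rfl⟩
      simpa using pow_le_one₀ (norm_nonneg a) ha
    have := closure_minimal hball Metric.isClosed_closedBall hmem
    simp only [Metric.mem_closedBall, dist_zero_right, norm_pow] at this
    exact this.not_gt (one_lt_pow₀ hc hd)
  · refine ⟨c⁻¹, fun hmem => ?_⟩
    have hcompl : Set.range (a ^ · : ℕ → 𝕜) ⊆ {z | 1 ≤ ‖z‖} := by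
      rintro _ ⟨n, rfl⟩
      simpa using one_le_pow₀ ha
    have := closure_minimal hcompl (isClosed_le continuous_const continuous_norm) hmem
    simp only [Set.mem_ofPred_eq, norm_pow, norm_inv] at this
    exact this.not_gt (pow_lt_one₀ (by positivity) (inv_lt_one_of_one_lt₀ hc) hd)

theorem exists_basis_comp_of_span_eq_top {K V : Type*} {ι : Type u} [DivisionRing K]
    [AddCommGroup V] [Module K V] [FiniteDimensional K V] {v : ι → V}
    (hv : Submodule.span K (Set.range v) = ⊤) :
    ∃ (κ : Type u) (_ : Fintype κ) (b : Module.Basis κ K V) (a : κ → ι), ⇑b = v ∘ a := by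
  obtain ⟨κ, a, -, hspan, hli⟩ := exists_linearIndependent' K v
  let b := Module.Basis.mk hli (hspan.trans hv).ge
  exact ⟨κ, FiniteDimensional.fintypeBasisIndex b, b, a, Module.Basis.coe_mk _ _⟩

section OrbitDet

variable {R M ι : Type*} [CommRing R] [AddCommGroup M] [Module R M] [TopologicalSpace M]
  [Fintype ι] [DecidableEq ι] (b : Module.Basis ι R M) (T : M →L[R] M) (N : ι → ℕ)

noncomputable def Module.Basis.orbitDet (y : M) : R :=
  b.det fun i => (T ^ N i) y

namespace Module.Basis

theorem orbitDet_eq_one {x : M} (hb : ⇑b = fun i => (T ^ N i) x) : b.orbitDet T N x = 1 := by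
  rw [orbitDet, ← hb, det_self]

theorem orbitDet_apply_map (y : M) :
    b.orbitDet T N (T y) = LinearMap.det (T : M →ₗ[R] M) * b.orbitDet T N y := by
  have hcomm : (fun i => (T ^ N i) (T y)) = (T : M →ₗ[R] M) ∘ fun i => (T ^ N i) y := by
    funext i
    simp only [Function.comp_apply, ContinuousLinearMap.coe_coe, ← mul_apply_eq_comp,
      (Commute.self_pow T (N i)).eq]
  rw [orbitDet, hcomm, det_comp, orbitDet]

theorem orbitDet_pow_apply (n : ℕ) (y : M) :
    b.orbitDet T N ((T ^ n) y) = LinearMap.det (T : M →ₗ[R] M) ^ n * b.orbitDet T N y := by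
  induction n with
  | zero => simp
  | succ n ih =>
    rw [pow_succ', mul_apply_eq_comp, orbitDet_apply_map, ih, pow_succ', mul_assoc]

theorem orbitDet_smul (c : R) (y : M) :
    b.orbitDet T N (c • y) = c ^ Fintype.card ι * b.orbitDet T N y := by
  simpa [orbitDet, Finset.prod_const] using
    b.det.toMultilinearMap.map_smul_univ (fun _ => c) fun i => (T ^ N i) y

end Module.Basis

end OrbitDet

section TopologicalVectorSpace

variable {𝕜 E : Type*} [NontriviallyNormedField 𝕜] [CompleteSpace 𝕜] [AddCommGroup E]
  [TopologicalSpace E] [IsTopologicalAddGroup E] [Module 𝕜 E] [ContinuousSMul 𝕜 E] [T2Space E]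
  [FiniteDimensional 𝕜 E]

theorem Submodule.span_eq_top_of_dense {s : Set E} (hs : Dense s) : Submodule.span 𝕜 s = ⊤ := by
  rw [← (closed_of_finiteDimensional (span 𝕜 s)).submodule_topologicalClosure_eq,
    ← dense_iff_topologicalClosure_eq_top]
  exact hs.mono subset_span

theorem Module.Basis.continuous_orbitDet {ι : Type*} [Fintype ι] [DecidableEq ι]
    (b : Module.Basis ι 𝕜 E) (T : E →L[𝕜] E) (N : ι → ℕ) : Continuous (b.orbitDet T N) := by
  change Continuous fun y => (b.toMatrix fun i => (T ^ N i) y).det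
  refine Continuous.matrix_det (continuous_matrix fun i j => ?_)
  exact (b.coord i).continuous_of_finiteDimensional.comp (T ^ N j).continuous

theorem Hypercyclic.finrank_eq_zero {T : E →L[𝕜] E} (hT : Hypercyclic T) :
    Module.finrank 𝕜 E = 0 := by
  obtain ⟨x, hx⟩ := hT
  obtain ⟨ι, _, b, N, hb⟩ :=
    exists_basis_comp_of_span_eq_top (Submodule.span_eq_top_of_dense (𝕜 := 𝕜) hx)
  classical
  by_contra hd
  rw [Module.finrank_eq_card_basis b] at hd
  obtain ⟨t, ht⟩ := exists_pow_notMem_closure_range_pow (LinearMap.det (T : E →ₗ[𝕜] E)) hd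
  have hbx : b.orbitDet T N x = 1 := b.orbitDet_eq_one T N hb
  have hmaps : Set.MapsTo (b.orbitDet T N) (Set.range fun n : ℕ => (T ^ n) x)
      (Set.range (LinearMap.det (T : E →ₗ[𝕜] E) ^ ·)) := by
    rintro _ ⟨n, rfl⟩
    exact ⟨n, by rw [b.orbitDet_pow_apply, hbx, mul_one]⟩
  apply ht
  simpa [b.orbitDet_smul, hbx] using map_mem_closure (b.continuous_orbitDet T N) (hx (t • x)) hmaps

end TopologicalVectorSpace

/-- Kitai's theorem: no continuous linear operator on a nonzero finite-dimensional
normed space over `ℝ` or `ℂ` is hypercyclic. -/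
theorem not_hypercyclic_of_finiteDimensional {𝕜 E : Type*} [RCLike 𝕜]
    [NormedAddCommGroup E] [NormedSpace 𝕜 E] [FiniteDimensional 𝕜 E]
    (h : 1 ≤ Module.finrank 𝕜 E) (T : E →L[𝕜] E) : ¬Hypercyclic T := fun hT => by
  have := hT.finrank_eq_zero
  omega
end

section
/- If T is a hypercyclic bounded linear operator on a complex Banach space X, then the spectrum of T intersects the unit circle, i.e. there exists z ∈ σ(T) with |z| = 1. -/
/-!
If `σ(T)` misses the unit circle, choose radii `r < 1 < r'` with no spectrum in between and
integrate `z ^ n • (z - T)⁻¹` over the circles `|z| = r` and `|z| = r'`. Since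
`T (z - T)⁻¹ = z (z - T)⁻¹ - 1`, multiplication by `T` shifts these moments, and one obtains the
Riesz projection `P = (2πi)⁻¹ ∮_{|z|=r} (z - T)⁻¹ dz` with `Tⁿ P` bounded, together with operators
`Qₙ = (2πi)⁻¹ ∮_{|z|=r'} z⁻ⁿ (z - T)⁻¹ dz` satisfying `Qₙ Tⁿ = P - 1` and `‖Qₙ‖ = O(r'⁻ⁿ)`.
For a vector `x` with dense orbit, `Px = x` would make the orbit bounded; otherwise
`‖x - Px‖ ≤ ‖Qₙ‖ ‖Tⁿ x‖`, which fails for the infinitely many `n` with `‖Tⁿ x‖ < 1`.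
-/

open Filter Topology

open Metric Bornology

theorem ContinuousLinearMap.map_circleIntegral {E F : Type*} [NormedAddCommGroup E]
    [NormedSpace ℂ E] [CompleteSpace E] [NormedAddCommGroup F] [NormedSpace ℂ F] [CompleteSpace F]
    (L : E →L[ℂ] F) {f : ℂ → E} {c : ℂ} {R : ℝ} (hf : CircleIntegrable f c R) :
    L (∮ z in C(c, R), f z) = ∮ z in C(c, R), L (f z) := by
  simp only [circleIntegral, ← L.intervalIntegral_comp_comm hf.out, map_smul]

theorem DenseRange.frequently_mem {X : Type*} [TopologicalSpace X] [T1Space X]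
    [∀ x : X, NeBot (𝓝[≠] x)] {u : ℕ → X} (hu : DenseRange u) {U : Set X} (hU : IsOpen U)
    (hne : U.Nonempty) : ∃ᶠ n in atTop, u n ∈ U := by
  refine frequently_atTop.2 fun N => ?_
  obtain ⟨_, hyU, ⟨n, rfl⟩, hnN⟩ :=
    (hu.sdiff_finite ((Set.finite_Iio N).image u)).inter_open_nonempty U hU hne
  exact ⟨n, not_lt.1 fun h => hnN ⟨n, h, rfl⟩, hyU⟩

section ResolventMoment

variable {A : Type*} [NormedRing A] [NormedAlgebra ℂ A]

theorem mul_resolvent {a : A} {z : ℂ} (hz : z ∈ resolventSet ℂ a) :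
    a * resolvent a z = z • resolvent a z - 1 := by
  rw [eq_sub_iff_add_eq, Algebra.smul_def, ← Ring.mul_inverse_cancel _ hz, resolvent, sub_mul,
    add_sub_cancel]

theorem resolvent_mul {a : A} {z : ℂ} (hz : z ∈ resolventSet ℂ a) :
    resolvent a z * a = z • resolvent a z - 1 := by
  rw [eq_sub_iff_add_eq, Algebra.smul_def, ← Ring.inverse_mul_cancel _ hz, resolvent, mul_sub,
    Algebra.commutes, add_sub_cancel]

variable [CompleteSpace A]

theorem differentiableAt_zpow_smul_resolvent {a : A} (n : ℤ) {z : ℂ}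
    (hz : z ∈ resolventSet ℂ a) (hz0 : z ≠ 0) :
    DifferentiableAt ℂ (fun w : ℂ => w ^ n • resolvent a w) z :=
  (differentiableAt_zpow.2 (Or.inl hz0)).smul
    (spectrum.hasDerivAt_resolvent_const_left hz).differentiableAt

noncomputable def resolventMoment (a : A) (ρ : ℝ) (n : ℤ) : A :=
  ∮ z in C(0, ρ), z ^ n • resolvent a z

variable {a : A} {ρ : ℝ}

theorem circleIntegrable_zpow_smul_resolvent (hρ : 0 < ρ)
    (hs : sphere (0 : ℂ) ρ ⊆ resolventSet ℂ a) (n : ℤ) :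
    CircleIntegrable (fun z : ℂ => z ^ n • resolvent a z) 0 ρ :=
  ContinuousOn.circleIntegrable hρ.le fun z hz =>
    (differentiableAt_zpow_smul_resolvent n (hs hz)
      (ne_zero_of_mem_sphere hρ.ne' ⟨z, hz⟩)).continuousAt.continuousWithinAt

theorem resolventMoment_eq_of_annulus {r R : ℝ} (hr : 0 < r) (hrR : r ≤ R)
    (h : ∀ z : ℂ, r ≤ ‖z‖ → ‖z‖ ≤ R → z ∈ resolventSet ℂ a) (n : ℤ) :
    resolventMoment a R n = resolventMoment a r n := by
  have hdiff : ∀ z ∈ closedBall (0 : ℂ) R \ ball 0 r,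
      DifferentiableAt ℂ (fun w : ℂ => w ^ n • resolvent a w) z := by
    rintro z ⟨hzR, hzr⟩
    rw [mem_closedBall_zero_iff] at hzR
    rw [mem_ball_zero_iff, not_lt] at hzr
    exact differentiableAt_zpow_smul_resolvent n (h z hzr hzR)
      (norm_pos_iff.1 (hr.trans_le hzr))
  exact Complex.circleIntegral_eq_of_differentiable_on_annulus_off_countable hr hrR
    Set.countable_empty (fun z hz => (hdiff z hz).continuousAt.continuousWithinAt)
    fun z hz => hdiff z (Set.sdiff_subset_sdiff ball_subset_closedBall ball_subset_closedBall hz.1)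

theorem commute_resolventMoment (hρ : 0 < ρ) (hs : sphere (0 : ℂ) ρ ⊆ resolventSet ℂ a) (n : ℤ) :
    Commute a (resolventMoment a ρ n) := by
  have hf := circleIntegrable_zpow_smul_resolvent hρ hs n
  change ContinuousLinearMap.mul ℂ A a _ = (ContinuousLinearMap.mul ℂ A).flip a _
  rw [resolventMoment, ContinuousLinearMap.map_circleIntegral _ hf,
    ContinuousLinearMap.map_circleIntegral _ hf]
  refine circleIntegral.integral_congr hρ.le fun z hz => ?_
  simp only [ContinuousLinearMap.mul_apply', ContinuousLinearMap.flip_apply, mul_smul_comm,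
    smul_mul_assoc, mul_resolvent (hs hz), resolvent_mul (hs hz)]

theorem mul_resolventMoment (hρ : 0 < ρ) (hs : sphere (0 : ℂ) ρ ⊆ resolventSet ℂ a) (n : ℤ) :
    a * resolventMoment a ρ n
      = resolventMoment a ρ (n + 1) - (∮ z in C(0, ρ), z ^ n) • (1 : A) := by
  have hconst : CircleIntegrable (fun z : ℂ => z ^ n • (1 : A)) 0 ρ :=
    ContinuousOn.circleIntegrable hρ.le fun z hz =>
      ((continuousAt_zpow₀ z n (Or.inl (ne_zero_of_mem_sphere hρ.ne' ⟨z, hz⟩))).smul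
        continuousAt_const).continuousWithinAt
  change ContinuousLinearMap.mul ℂ A a _ = _
  rw [resolventMoment, ContinuousLinearMap.map_circleIntegral _
    (circleIntegrable_zpow_smul_resolvent hρ hs n), ← circleIntegral.integral_smul_const,
    resolventMoment, ← circleIntegral.integral_sub
    (circleIntegrable_zpow_smul_resolvent hρ hs (n + 1)) hconst]
  refine circleIntegral.integral_congr hρ.le fun z hz => ?_
  simp only [ContinuousLinearMap.mul_apply', mul_smul_comm, mul_resolvent (hs hz), smul_sub,
    smul_smul, ← zpow_add_one₀ (ne_zero_of_mem_sphere hρ.ne' ⟨z, hz⟩)]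

theorem mul_resolventMoment_of_ne_neg_one (hρ : 0 < ρ) (hs : sphere (0 : ℂ) ρ ⊆ resolventSet ℂ a)
    {n : ℤ} (hn : n ≠ -1) : a * resolventMoment a ρ n = resolventMoment a ρ (n + 1) := by
  have hint := circleIntegral.integral_sub_zpow_of_ne hn 0 0 ρ
  simp only [sub_zero] at hint
  rw [mul_resolventMoment hρ hs, hint, zero_smul, sub_zero]

theorem mul_resolventMoment_neg_one (hρ : 0 < ρ) (hs : sphere (0 : ℂ) ρ ⊆ resolventSet ℂ a) :
    a * resolventMoment a ρ (-1)
      = resolventMoment a ρ 0 - (2 * Real.pi * Complex.I) • (1 : A) := by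
  have hint := circleIntegral.integral_sub_center_inv 0 hρ.ne'
  simp only [sub_zero] at hint
  simp only [mul_resolventMoment hρ hs, zpow_neg_one, hint, neg_add_cancel]

theorem pow_mul_resolventMoment_zero (hρ : 0 < ρ) (hs : sphere (0 : ℂ) ρ ⊆ resolventSet ℂ a)
    (k : ℕ) : a ^ k * resolventMoment a ρ 0 = resolventMoment a ρ k := by
  induction k with
  | zero => simp
  | succ k ih =>
    rw [pow_succ', mul_assoc, ih, mul_resolventMoment_of_ne_neg_one hρ hs (by omega)]
    push_cast; rfl

theorem pow_mul_resolventMoment_neg (hρ : 0 < ρ) (hs : sphere (0 : ℂ) ρ ⊆ resolventSet ℂ a)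
    {k : ℕ} (hk : 1 ≤ k) :
    a ^ k * resolventMoment a ρ (-k) = resolventMoment a ρ 0 - (2 * Real.pi * Complex.I) • 1 := by
  induction k, hk using Nat.le_induction with
  | base => simpa using mul_resolventMoment_neg_one hρ hs
  | succ k hk ih =>
    rw [pow_succ, mul_assoc, mul_resolventMoment_of_ne_neg_one hρ hs (by omega), ← ih]
    push_cast; ring_nf

theorem exists_norm_resolventMoment_le (hρ : 0 < ρ) (hs : sphere (0 : ℂ) ρ ⊆ resolventSet ℂ a) :
    ∃ C : ℝ, ∀ n : ℤ, ‖resolventMoment a ρ n‖ ≤ C * ρ ^ n := by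
  obtain ⟨C, hC⟩ := (isCompact_sphere (0 : ℂ) ρ).exists_bound_of_continuousOn fun z hz =>
    (spectrum.hasDerivAt_resolvent_const_left (hs hz)).continuousAt.continuousWithinAt
  refine ⟨2 * Real.pi * ρ * C, fun n => ?_⟩
  have hbound : ∀ z ∈ sphere (0 : ℂ) ρ, ‖z ^ n • resolvent a z‖ ≤ ρ ^ n * C := fun z hz => by
    rw [norm_smul, norm_zpow, mem_sphere_zero_iff_norm.1 hz]
    exact mul_le_mul_of_nonneg_left (hC z hz) (zpow_nonneg hρ.le n)
  calc ‖resolventMoment a ρ n‖ ≤ 2 * Real.pi * ρ * (ρ ^ n * C) :=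
        circleIntegral.norm_integral_le_of_norm_le_const hρ.le hbound
    _ = 2 * Real.pi * ρ * C * ρ ^ n := by ring

theorem isBounded_range_pow_mul_resolventMoment_zero (hρ : 0 < ρ) (hρ1 : ρ ≤ 1)
    (hs : sphere (0 : ℂ) ρ ⊆ resolventSet ℂ a) :
    IsBounded (Set.range fun k : ℕ => a ^ k * resolventMoment a ρ 0) := by
  obtain ⟨C, hC⟩ := exists_norm_resolventMoment_le hρ hs
  refine isBounded_iff_forall_norm_le.2 ⟨|C|, ?_⟩
  rintro _ ⟨k, rfl⟩
  dsimp only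
  rw [pow_mul_resolventMoment_zero hρ hs]
  calc ‖resolventMoment a ρ k‖ ≤ C * ρ ^ (k : ℤ) := hC k
    _ ≤ |C| * 1 := by
      rw [zpow_natCast]
      exact mul_le_mul (le_abs_self C) (pow_le_one₀ hρ.le hρ1) (by positivity) (abs_nonneg C)
    _ = |C| := mul_one _

theorem tendsto_resolventMoment_neg (hρ : 1 < ρ) (hs : sphere (0 : ℂ) ρ ⊆ resolventSet ℂ a) :
    Tendsto (fun k : ℕ => resolventMoment a ρ (-k)) atTop (𝓝 0) := by
  obtain ⟨C, hC⟩ := exists_norm_resolventMoment_le (zero_lt_one.trans hρ) hs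
  have hgeom := (tendsto_pow_atTop_nhds_zero_of_lt_one (by positivity)
    (inv_lt_one_of_one_lt₀ hρ)).const_mul C
  rw [mul_zero] at hgeom
  refine squeeze_zero_norm (fun k => ?_) hgeom
  simpa [zpow_neg, inv_pow] using hC (-k)

end ResolventMoment

section RieszSplitting

variable {A : Type*} [NormedRing A] [NormedAlgebra ℂ A] [CompleteSpace A]

theorem exists_annulus_subset_resolventSet (a : A) {ρ : ℝ} (h : ∀ z ∈ spectrum ℂ a, ‖z‖ ≠ ρ) :
    ∃ ε > 0, ∀ z : ℂ, |‖z‖ - ρ| < ε → z ∈ resolventSet ℂ a := by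
  have hclosed : IsClosed (norm '' spectrum ℂ a) :=
    ((spectrum.isCompact a).image continuous_norm).isClosed
  have hρ : ρ ∈ (norm '' spectrum ℂ a)ᶜ := by
    rintro ⟨z, hz, rfl⟩
    exact h z hz rfl
  obtain ⟨ε, hε, hball⟩ := Metric.isOpen_iff.1 hclosed.isOpen_compl ρ hρ
  refine ⟨ε, hε, fun z hz => ?_⟩
  by_contra hspec
  exact hball (by rwa [mem_ball, Real.dist_eq]) ⟨z, hspec, rfl⟩

/-- `P` is the Riesz projection onto the part of the spectrum inside the unit circle, and `-Q k`
inverts `a ^ k` on the complementary spectral subspace. -/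
theorem exists_isBounded_pow_mul_and_mul_pow_eq (a : A) (h : ∀ z ∈ spectrum ℂ a, ‖z‖ ≠ 1) :
    ∃ (P : A) (Q : ℕ → A), IsBounded (Set.range fun k : ℕ => a ^ k * P) ∧
      Tendsto Q atTop (𝓝 0) ∧ ∀ k ≥ 1, Q k * a ^ k = P - 1 := by
  obtain ⟨ε, hε, hann⟩ := exists_annulus_subset_resolventSet a h
  set δ := min (ε / 2) (1 / 2)
  have hδ : 0 < δ := lt_min (half_pos hε) one_half_pos
  have hδε : δ < ε := (min_le_left _ _).trans_lt (half_lt_self hε)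
  have hδ1 : δ < 1 := (min_le_right _ _).trans_lt one_half_lt_one
  have hres : ∀ z : ℂ, 1 - δ ≤ ‖z‖ → ‖z‖ ≤ 1 + δ → z ∈ resolventSet ℂ a := fun z h₁ h₂ =>
    hann z (abs_sub_lt_iff.2 ⟨by linarith, by linarith⟩)
  have hin : sphere (0 : ℂ) (1 - δ) ⊆ resolventSet ℂ a := fun z hz => by
    rw [mem_sphere_zero_iff_norm] at hz
    exact hres z hz.ge (by linarith)
  have hout : sphere (0 : ℂ) (1 + δ) ⊆ resolventSet ℂ a := fun z hz => by
    rw [mem_sphere_zero_iff_norm] at hz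
    exact hres z (by linarith) hz.le
  set c : ℂ := 2 * Real.pi * Complex.I
  have hc : c ≠ 0 := by simp [c, Real.pi_ne_zero, Complex.I_ne_zero]
  refine ⟨c⁻¹ • resolventMoment a (1 - δ) 0,
    fun k => c⁻¹ • resolventMoment a (1 + δ) (-k), ?_, ?_, fun k hk => ?_⟩
  · simpa only [mul_smul_comm, Set.smul_set_range] using
      (isBounded_range_pow_mul_resolventMoment_zero (by linarith) (by linarith) hin).smul₀ c⁻¹
  · simpa using (tendsto_resolventMoment_neg (by linarith) hout).const_smul c⁻¹
  · rw [smul_mul_assoc, ← ((commute_resolventMoment (by linarith) hout _).pow_left k).eq,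
      pow_mul_resolventMoment_neg (by linarith) hout hk,
      resolventMoment_eq_of_annulus (by linarith) (by linarith) hres, smul_sub, smul_smul,
      inv_mul_cancel₀ hc, one_smul]

end RieszSplitting

theorem not_hypercyclic_of_isBounded_pow_mul_of_mul_pow_eq {𝕜 X : Type*}
    [NontriviallyNormedField 𝕜] [NormedAddCommGroup X] [NormedSpace 𝕜 X] [Nontrivial X]
    {T P : X →L[𝕜] X} {Q : ℕ → X →L[𝕜] X} (hP : IsBounded (Set.range fun k : ℕ => T ^ k * P))
    (hQ : Tendsto Q atTop (𝓝 0)) (hPQ : ∀ k ≥ 1, Q k * T ^ k = P - 1) : ¬ Hypercyclic T := by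
  rintro ⟨x, hx⟩
  by_cases hPx : P x = x
  · have horbit : (Set.range fun k : ℕ => (T ^ k) x)
        = (fun B : X →L[𝕜] X => B x) '' Set.range fun k : ℕ => T ^ k * P := by
      rw [← Set.range_comp]
      simp [Function.comp_def, hPx]
    refine NormedSpace.unbounded_univ 𝕜 X ?_
    rw [← hx.closure_eq, horbit]
    exact ((ContinuousLinearMap.apply 𝕜 X x).lipschitz.isBounded_image hP).closure
  · have hq : 0 < ‖x - P x‖ := norm_pos_iff.2 (sub_ne_zero.2 (Ne.symm hPx))
    have : ∀ y : X, NeBot (𝓝[≠] y) := Module.punctured_nhds_neBot 𝕜 X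
    have hsmall : ∃ᶠ k in atTop, (T ^ k) x ∈ ball 0 1 :=
      DenseRange.frequently_mem (u := fun k => (T ^ k) x) hx isOpen_ball
        ⟨0, mem_ball_self one_pos⟩
    obtain ⟨k, hTk, hQk, hk⟩ := (hsmall.and_eventually
      (((tendsto_zero_iff_norm_tendsto_zero.1 hQ).eventually (gt_mem_nhds hq)).and
        (eventually_ge_atTop 1))).exists
    rw [mem_ball_zero_iff] at hTk
    have hdecomp : Q k ((T ^ k) x) = -(x - P x) := by
      simpa using DFunLike.congr_fun (hPQ k hk) x
    have hle : ‖x - P x‖ ≤ ‖Q k‖ := calc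
      ‖x - P x‖ = ‖Q k ((T ^ k) x)‖ := by rw [hdecomp, norm_neg]
      _ ≤ ‖Q k‖ * ‖(T ^ k) x‖ := (Q k).le_opNorm _
      _ ≤ ‖Q k‖ := mul_le_of_le_one_right (norm_nonneg _) hTk.le
    exact lt_irrefl _ (hQk.trans_le hle)

/-- The spectrum of a hypercyclic bounded operator on a (nonzero) complex Banach space
meets the unit circle. -/
theorem spectrum_inter_unitCircle_of_hypercyclic {X : Type*}
    [NormedAddCommGroup X] [NormedSpace ℂ X] [CompleteSpace X] [Nontrivial X]
    (T : X →L[ℂ] X) (hT : Hypercyclic T) :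
    ∃ z ∈ spectrum ℂ T, ‖z‖ = 1 := by
  by_contra! h
  obtain ⟨P, Q, hP, hQ, hPQ⟩ := exists_isBounded_pow_mul_and_mul_pow_eq T h
  exact not_hypercyclic_of_isBounded_pow_mul_of_mul_pow_eq hP hQ hPQ hT
end

section
/- Let T be a continuous linear operator on a separable Fréchet space F. Then T satisfies the Hypercyclicity Criterion if and only if the direct sum operator T ⊕ T, acting on F × F by (f,g) ↦ (Tf, Tg), is hypercyclic on F × F (with the product topology). -/
/-
If `T` satisfies the criterion along `(n_k)`, so does `T ⊕ T`, with the dense sets `X₀ × X₀` and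
`Y₀ × Y₀`. The criterion makes an operator topologically transitive: `f + u_k` starts near
`f ∈ X₀` and `T ^ n_k (f + u_k)` lands near `g ∈ Y₀`. On a separable completely metrizable space,
transitivity gives a dense orbit by Baire's theorem (Birkhoff).

Conversely, let `(x, y)` have a dense orbit under `T ⊕ T`; then `x` is hypercyclic for `T`. Given
a neighbourhood `W` of `0`, pick `j` with `z = y - T ^ j x ∈ W`. As `F × F` has no isolated
points, the orbit of `(x, y)` returns infinitely often near `(0, x)`, and at such times `p` both
`T ^ p x` and `T ^ p z - x = (T ^ p y - x) - T ^ j (T ^ p x)` lie in `W`. A diagonal choice along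
a countable basis at `0` yields `n_k` with `T ^ n_k x → 0` and `z_k → 0`, `T ^ n_k z_k → x`.
Since the powers of `T` commute, the orbit of `x` then serves as both `X₀` and `Y₀`.
-/

open Filter Topology

/-- `T` satisfies the Hypercyclicity Criterion: there are a strictly increasing sequence
of positive integers `n k` and dense sets `X₀`, `Y₀` such that `T ^ (n k) f → 0` for all
`f ∈ X₀`, and for every `g ∈ Y₀` there is a sequence `u k → 0` with `T ^ (n k) (u k) → g`. -/
def SatisfiesHypercyclicityCriterion {𝕜 F : Type*} [Semiring 𝕜] [TopologicalSpace F]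
    [AddCommMonoid F] [Module 𝕜 F] (T : F →L[𝕜] F) : Prop :=
  ∃ n : ℕ → ℕ, StrictMono n ∧ (∀ k, 0 < n k) ∧
    ∃ X₀ Y₀ : Set F, Dense X₀ ∧ Dense Y₀ ∧
      (∀ f ∈ X₀, Tendsto (fun k => (T ^ n k) f) atTop (nhds 0)) ∧
      (∀ g ∈ Y₀, ∃ u : ℕ → F, Tendsto u atTop (nhds 0) ∧
        Tendsto (fun k => (T ^ n k) (u k)) atTop (nhds g))

open Set Uniformity

theorem exists_denseRange_of_forall_inter_preimage_nonempty {X Y : Type*} [TopologicalSpace X]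
    [BaireSpace X] [Nonempty X] [TopologicalSpace Y] [SecondCountableTopology Y]
    {f : ℕ → X → Y} (hf : ∀ m, Continuous (f m))
    (h : ∀ U V, IsOpen U → U.Nonempty → IsOpen V → V.Nonempty → ∃ m, (U ∩ f m ⁻¹' V).Nonempty) :
    ∃ x, DenseRange fun m => f m x := by
  set B := {V ∈ TopologicalSpace.countableBasis Y | V.Nonempty}
  have hB := TopologicalSpace.isBasis_countableBasis Y
  have hdense : Dense (⋂ V ∈ B, ⋃ m, f m ⁻¹' V) := by
    refine dense_biInter_of_isOpen (fun V hV => isOpen_iUnion fun m => ?_)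
      ((TopologicalSpace.countable_countableBasis Y).mono (sep_subset _ _)) (fun V hV => ?_)
    · exact (hB.isOpen hV.1).preimage (hf m)
    · refine dense_iff_inter_open.2 fun U hU hUne => ?_
      obtain ⟨m, p, hpU, hpV⟩ := h U V hU hUne (hB.isOpen hV.1) hV.2
      exact ⟨p, hpU, mem_iUnion.2 ⟨m, hpV⟩⟩
  obtain ⟨x, hx⟩ := hdense.nonempty
  refine ⟨x, hB.dense_iff.2 fun V hV hVne => ?_⟩
  obtain ⟨m, hm⟩ := mem_iUnion.1 (mem_iInter₂.1 hx V ⟨hV, hVne⟩)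
  exact ⟨f m x, hm, mem_range_self m⟩

theorem DenseRange.mapClusterPt {X : Type*} [TopologicalSpace X] [T1Space X]
    [∀ x : X, NeBot (𝓝[≠] x)] {f : ℕ → X} (hf : DenseRange f) (x : X) :
    MapClusterPt x atTop f := by
  refine mapClusterPt_iff_frequently.2 fun s hs =>
    Nat.frequently_atTop_iff_infinite.2 fun hfin => ?_
  obtain ⟨_, ⟨⟨n, rfl⟩, hn⟩, hns⟩ := (hf.sdiff_finite (hfin.image f)).inter_nhds_nonempty hs
  exact hn ⟨n, hns, rfl⟩

namespace ContinuousLinearMap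

variable {𝕜 F : Type*} [Semiring 𝕜] [TopologicalSpace F] [AddCommMonoid F] [Module 𝕜 F]

theorem prodMap_pow (T S : F →L[𝕜] F) (n : ℕ) : T.prodMap S ^ n = (T ^ n).prodMap (S ^ n) := by
  induction n with
  | zero => ext <;> simp
  | succ n ih => ext <;> simp [pow_succ, ih]

theorem pow_apply_pow_apply_comm (T : F →L[𝕜] F) (m n : ℕ) (x : F) :
    (T ^ m) ((T ^ n) x) = (T ^ n) ((T ^ m) x) :=
  DFunLike.congr_fun (pow_mul_comm T m n) x

end ContinuousLinearMap

namespace SatisfiesHypercyclicityCriterion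

variable {𝕜 F : Type*} [Semiring 𝕜] [TopologicalSpace F] [AddCommMonoid F] [Module 𝕜 F]
  {T : F →L[𝕜] F}

theorem prodMap (h : SatisfiesHypercyclicityCriterion T) :
    SatisfiesHypercyclicityCriterion (T.prodMap T) := by
  obtain ⟨n, hn, hpos, X₀, Y₀, hX₀, hY₀, hzero, happrox⟩ := h
  refine ⟨n, hn, hpos, X₀ ×ˢ X₀, Y₀ ×ˢ Y₀, hX₀.prod hX₀, hY₀.prod hY₀, ?_, ?_⟩
  · rintro f ⟨hf₁, hf₂⟩
    simpa only [ContinuousLinearMap.prodMap_pow, ContinuousLinearMap.coe_prodMap', Prod.map,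
      Prod.mk_zero_zero] using (hzero f.1 hf₁).prodMk_nhds (hzero f.2 hf₂)
  · rintro g ⟨hg₁, hg₂⟩
    obtain ⟨u₁, hu₁, hTu₁⟩ := happrox g.1 hg₁
    obtain ⟨u₂, hu₂, hTu₂⟩ := happrox g.2 hg₂
    refine ⟨fun k => (u₁ k, u₂ k), by simpa only [Prod.mk_zero_zero] using hu₁.prodMk_nhds hu₂, ?_⟩
    simpa only [ContinuousLinearMap.prodMap_pow, ContinuousLinearMap.coe_prodMap', Prod.map] using
      hTu₁.prodMk_nhds hTu₂

theorem exists_inter_preimage_pow_nonempty [ContinuousAdd F]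
    (h : SatisfiesHypercyclicityCriterion T) {U V : Set F} (hU : IsOpen U) (hUne : U.Nonempty)
    (hV : IsOpen V) (hVne : V.Nonempty) : ∃ m, (U ∩ ⇑(T ^ m) ⁻¹' V).Nonempty := by
  obtain ⟨n, -, -, X₀, Y₀, hX₀, hY₀, hzero, happrox⟩ := h
  obtain ⟨f, hfX₀, hfU⟩ := hX₀.exists_mem_open hU hUne
  obtain ⟨g, hgY₀, hgV⟩ := hY₀.exists_mem_open hV hVne
  obtain ⟨u, hu, hTu⟩ := happrox g hgY₀
  have hstart : Tendsto (fun k => f + u k) atTop (𝓝 f) := by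
    simpa using tendsto_const_nhds.add hu
  have hend : Tendsto (fun k => (T ^ n k) (f + u k)) atTop (𝓝 g) := by
    simpa using (hzero f hfX₀).add hTu
  obtain ⟨k, hkU, hkV⟩ :=
    ((hstart.eventually (hU.mem_nhds hfU)).and (hend.eventually (hV.mem_nhds hgV))).exists
  exact ⟨n k, f + u k, hkU, hkV⟩

theorem of_tendsto {x : F} (hx : Dense (range fun j : ℕ => (T ^ j) x)) {n : ℕ → ℕ}
    (hn : StrictMono n) (hpos : ∀ k, 0 < n k) (hTx : Tendsto (fun k => (T ^ n k) x) atTop (𝓝 0)) {u : ℕ → F}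
    (hu : Tendsto u atTop (𝓝 0)) (hTu : Tendsto (fun k => (T ^ n k) (u k)) atTop (𝓝 x)) :
    SatisfiesHypercyclicityCriterion T := by
  refine ⟨n, hn, hpos, _, _, hx, hx, ?_, ?_⟩
  · rintro _ ⟨j, rfl⟩
    simpa only [T.pow_apply_pow_apply_comm, map_zero, Function.comp_def] using
      ((T ^ j).continuous.tendsto 0).comp hTx
  · rintro _ ⟨j, rfl⟩
    refine ⟨fun k => (T ^ j) (u k), by
      simpa only [map_zero, Function.comp_def] using ((T ^ j).continuous.tendsto 0).comp hu, ?_⟩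
    simpa only [T.pow_apply_pow_apply_comm, Function.comp_def] using
      ((T ^ j).continuous.tendsto x).comp hTu

theorem hypercyclic [ContinuousAdd F] [BaireSpace F] [SecondCountableTopology F]
    (h : SatisfiesHypercyclicityCriterion T) : Hypercyclic T :=
  exists_denseRange_of_forall_inter_preimage_nonempty (fun m => (T ^ m).continuous)
    fun _ _ hU hUne hV hVne => h.exists_inter_preimage_pow_nonempty hU hUne hV hVne

end SatisfiesHypercyclicityCriterion

section Converse

variable {𝕜 F : Type*} [TopologicalSpace F] [AddCommGroup F]

theorem exists_strictMono_pow_tendsto_of_frequently [Semiring 𝕜] [Module 𝕜 F]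
    [IsTopologicalAddGroup F] [(𝓝 (0 : F)).IsCountablyGenerated] {T : F →L[𝕜] F} {x : F}
    (h : ∀ W ∈ 𝓝 (0 : F), ∃ᶠ p in atTop, (T ^ p) x ∈ W ∧ ∃ z ∈ W, (T ^ p) z - x ∈ W) :
    ∃ n : ℕ → ℕ, StrictMono n ∧ (∀ k, 0 < n k) ∧ Tendsto (fun k => (T ^ n k) x) atTop (𝓝 0) ∧
      ∃ u : ℕ → F, Tendsto u atTop (𝓝 0) ∧ Tendsto (fun k => (T ^ n k) (u k)) atTop (𝓝 x) := by
  obtain ⟨b, hb⟩ := (𝓝 (0 : F)).exists_antitone_basis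
  have hfreq (k : ℕ) : ∃ᶠ p in atTop, 0 < p ∧ (T ^ p) x ∈ b k ∧ ∃ z ∈ b k, (T ^ p) z - x ∈ b k :=
    ((h _ (hb.mem k)).and_eventually (eventually_gt_atTop 0)).mono fun _ hp => ⟨hp.2, hp.1⟩
  obtain ⟨n, hn, hnb⟩ := extraction_forall_of_frequently hfreq
  choose hpos hTx u hu hTu using hnb
  exact ⟨n, hn, hpos, hb.tendsto hTx, u, hb.tendsto hu,
    tendsto_sub_nhds_zero_iff.1 (hb.tendsto hTu)⟩

theorem frequently_pow_mem_of_dense_orbit_prod [NontriviallyNormedField 𝕜] [Module 𝕜 F]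
    [IsTopologicalAddGroup F] [ContinuousSMul 𝕜 F] [T1Space F] {T : F →L[𝕜] F} {x y : F}
    (hxy : DenseRange fun p : ℕ => ((T ^ p) x, (T ^ p) y))
    (hx : Dense (range fun j : ℕ => (T ^ j) x)) {W : Set F} (hW : W ∈ 𝓝 0) :
    ∃ᶠ p in atTop, (T ^ p) x ∈ W ∧ ∃ z ∈ W, (T ^ p) z - x ∈ W := by
  rcases subsingleton_or_nontrivial F with hF | hF
  · have hmem (v : F) : v ∈ W := Subsingleton.elim 0 v ▸ mem_of_mem_nhds hW
    exact Frequently.of_forall fun p => ⟨hmem _, 0, hmem _, hmem _⟩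
  have := Module.punctured_nhds_neBot 𝕜 (F × F)
  obtain ⟨j, hj⟩ : ∃ j, y - (T ^ j) x ∈ W := by
    have : {v | y - v ∈ W} ∈ 𝓝 y :=
      (continuous_const.sub continuous_id).tendsto' y 0 (sub_self y) hW
    obtain ⟨_, ⟨j, rfl⟩, hj⟩ := hx.inter_nhds_nonempty this
    exact ⟨j, hj⟩
  -- `g` sends `(0, x)` to `(0, 0)` and `(T ^ p x, T ^ p y)` to `(T ^ p x, T ^ p z - x)`,
  -- where `z = y - T ^ j x`.
  set g : F × F → F × F := fun q => (q.1, q.2 - (T ^ j) q.1 - x)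
  have hg : MapClusterPt (0, 0) atTop (g ∘ fun p : ℕ => ((T ^ p) x, (T ^ p) y)) := by
    simpa only [g, map_zero, sub_zero, sub_self] using
      (hxy.mapClusterPt (0, x)).continuousAt_comp (by fun_prop : Continuous g).continuousAt
  refine (mapClusterPt_iff_frequently.1 hg _ (prod_mem_nhds hW hW)).mono fun p hp =>
    ⟨hp.1, _, hj, ?_⟩
  rw [map_sub, T.pow_apply_pow_apply_comm p j]
  exact hp.2

theorem SatisfiesHypercyclicityCriterion.of_hypercyclic_prodMap [NontriviallyNormedField 𝕜]
    [Module 𝕜 F] [IsTopologicalAddGroup F] [ContinuousSMul 𝕜 F] [T1Space F]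
    [(𝓝 (0 : F)).IsCountablyGenerated] {T : F →L[𝕜] F} (h : Hypercyclic (T.prodMap T)) :
    SatisfiesHypercyclicityCriterion T := by
  obtain ⟨⟨x, y⟩, hxy⟩ := h
  simp only [ContinuousLinearMap.prodMap_pow, ContinuousLinearMap.coe_prodMap', Prod.map] at hxy
  have hx : Dense (range fun j : ℕ => (T ^ j) x) :=
    Prod.fst_surjective.denseRange.comp hxy continuous_fst
  obtain ⟨n, hn, hpos, hTx, u, hu, hTu⟩ :=
    exists_strictMono_pow_tendsto_of_frequently fun _ hW =>
      frequently_pow_mem_of_dense_orbit_prod hxy hx hW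
  exact of_tendsto hx hn hpos hTx hu hTu

end Converse

theorem satisfiesHypercyclicityCriterion_iff_prodMap_hypercyclic_general {𝕜 F : Type*} [RCLike 𝕜]
    [AddCommGroup F] [Module 𝕜 F]
    [UniformSpace F] [IsUniformAddGroup F] [ContinuousSMul 𝕜 F]
    [TopologicalSpace.MetrizableSpace F] [CompleteSpace F]
    [TopologicalSpace.SeparableSpace F] (T : F →L[𝕜] F) :
    SatisfiesHypercyclicityCriterion T ↔ Hypercyclic (T.prodMap T) := by
  have : (𝓤 F).IsCountablyGenerated := IsUniformAddGroup.uniformity_countably_generated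
  have : SecondCountableTopology F := UniformSpace.secondCountable_of_separable F
  exact ⟨fun h => h.prodMap.hypercyclic, .of_hypercyclic_prodMap⟩

/-- Bès–Peris theorem: on a separable Fréchet space, `T` satisfies the Hypercyclicity
Criterion iff `T ⊕ T` is hypercyclic on `F × F`. -/
theorem satisfiesHypercyclicityCriterion_iff_prodMap_hypercyclic {𝕜 F : Type*} [RCLike 𝕜]
    [AddCommGroup F] [Module 𝕜 F] [Module ℝ F] [IsScalarTower ℝ 𝕜 F]
    [UniformSpace F] [IsUniformAddGroup F] [ContinuousSMul 𝕜 F]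
    [LocallyConvexSpace ℝ F] [TopologicalSpace.MetrizableSpace F] [CompleteSpace F]
    [TopologicalSpace.SeparableSpace F] (T : F →L[𝕜] F) :
    SatisfiesHypercyclicityCriterion T ↔ Hypercyclic (T.prodMap T) :=
  satisfiesHypercyclicityCriterion_iff_prodMap_hypercyclic_general T
end

section
/- Let H be a separable infinite-dimensional complex Hilbert space. Then the linear span of the set of hypercyclic bounded linear operators on H is dense in B(H) with respect to the operator norm. -/
open Filter Topology

/-!
Every operator `A` is a sum of two hypercyclic operators. Choose an orthonormal basis `(bᵢ)` for
which the spaces `F k = span {bᵢ | i + 1 < 2 ^ k}` have dense union and `A (F k) ⊆ F (k + 1)`.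
The isometry `V : bᵢ ↦ b₂ᵢ₊₁` satisfies `V* (F (k + 1)) ⊆ F k`, so for `c = 16 (‖A‖ + 1)` the
operator `J = c V*` lowers the filtration and has the right inverse `c⁻¹ V`, while a Neumann series
gives `A - J` a right inverse `S` with `‖S‖ ≤ (15 (‖A‖ + 1))⁻¹`. On `⋃ F k` the powers of `J`
eventually vanish and `‖(A - J) ^ n u‖` grows at most like `(8 (‖A‖ + 1)) ^ n`. Both `J` and
`A - J` therefore satisfy the hypercyclicity criterion "`T S = 1`, `S ^ n → 0` pointwise,
`S ^ n T ^ n → 0` on a dense set", which yields a dense orbit by Baire's theorem.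
-/

open Set Submodule

theorem exists_dense_range_apply_of_transitive {X Y : Type*} [TopologicalSpace X] [BaireSpace X]
    [Nonempty X] [TopologicalSpace Y] [SecondCountableTopology Y] {g : ℕ → X → Y}
    (hg : ∀ n, Continuous (g n))
    (htrans : ∀ U V, IsOpen U → IsOpen V → U.Nonempty → V.Nonempty →
      ∃ n, (U ∩ g n ⁻¹' V).Nonempty) :
    ∃ x, Dense (range fun n => g n x) := by
  obtain ⟨B, hBc, hB, hBasis⟩ := TopologicalSpace.exists_countable_basis Y
  have hG : Dense (⋂ s ∈ B, ⋃ n, g n ⁻¹' s) := by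
    refine dense_biInter_of_isOpen
      (fun s hs => isOpen_iUnion fun n => (hBasis.isOpen hs).preimage (hg n)) hBc
      fun s hs => dense_iff_inter_open.2 fun U hU hUne => ?_
    have hsne : s.Nonempty := nonempty_iff_ne_empty.2 fun h => hB (h ▸ hs)
    obtain ⟨n, x, hxU, hxs⟩ := htrans U s hU (hBasis.isOpen hs) hUne hsne
    exact ⟨x, hxU, mem_iUnion.2 ⟨n, hxs⟩⟩
  obtain ⟨x, hx⟩ := hG.nonempty
  refine ⟨x, hBasis.dense_iff.2 fun s hs _ => ?_⟩
  obtain ⟨n, hn⟩ := mem_iUnion.1 (mem_iInter₂.1 hx s hs)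
  exact ⟨g n x, hn, n, rfl⟩

theorem hypercyclic_of_mul_eq_one {R X : Type*} [Semiring R] [TopologicalSpace X]
    [AddCommGroup X] [IsTopologicalAddGroup X] [Module R X] [BaireSpace X]
    [SecondCountableTopology X] {T S : X →L[R] X} (hTS : T * S = 1)
    (hS : ∀ v, Tendsto (fun n => (S ^ n) v) atTop (𝓝 0)) {D : Set X} (hD : Dense D)
    (hDS : ∀ u ∈ D, Tendsto (fun n => (S ^ n) ((T ^ n) u)) atTop (𝓝 0)) : Hypercyclic T := by
  have : Nonempty X := ⟨0⟩
  refine exists_dense_range_apply_of_transitive (fun n => (T ^ n).continuous)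
    fun U V hU _ hUne ⟨v, hv⟩ => ?_
  obtain ⟨u, huU, huD⟩ := hD.inter_open_nonempty U hU hUne
  -- `T ^ n` maps `u + S ^ n (v - T ^ n u)` to `v`, and these points tend to `u`.
  have hlim : Tendsto (fun n => u + (S ^ n) (v - (T ^ n) u)) atTop (𝓝 u) := by
    simpa [map_sub] using tendsto_const_nhds.add ((hS v).sub (hDS u huD))
  obtain ⟨n, hn⟩ := (hlim.eventually (hU.mem_nhds huU)).exists
  refine ⟨n, _, hn, ?_⟩
  rw [mem_preimage, map_add, ← mul_apply_eq_comp, pow_mul_pow_eq_one n hTS,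
    one_apply_eq_self, add_sub_cancel]
  exact hv

section Normed

variable {𝕜 E : Type*} [NontriviallyNormedField 𝕜] [NormedAddCommGroup E] [NormedSpace 𝕜 E]

theorem norm_pow_apply_le (S : E →L[𝕜] E) (n : ℕ) (x : E) : ‖(S ^ n) x‖ ≤ ‖S‖ ^ n * ‖x‖ := by
  induction n with
  | zero => simp
  | succ n ih =>
    rw [pow_succ', mul_apply_eq_comp, pow_succ', mul_assoc]
    exact (S.le_opNorm _).trans (mul_le_mul_of_nonneg_left ih (norm_nonneg S))

theorem tendsto_pow_apply_nhds_zero {S : E →L[𝕜] E} {y : ℕ → E}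
    (h : Tendsto (fun n => ‖S‖ ^ n * ‖y n‖) atTop (𝓝 0)) :
    Tendsto (fun n => (S ^ n) (y n)) atTop (𝓝 0) :=
  squeeze_zero_norm (fun n => norm_pow_apply_le S n (y n)) h

theorem hypercyclic_of_mul_eq_one_of_norm_lt_one [CompleteSpace E]
    [TopologicalSpace.SeparableSpace E] {T S : E →L[𝕜] E} (hTS : T * S = 1) (hS : ‖S‖ < 1)
    {D : Set E} (hD : Dense D)
    (hDS : ∀ u ∈ D, Tendsto (fun n => ‖S‖ ^ n * ‖(T ^ n) u‖) atTop (𝓝 0)) : Hypercyclic T :=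
  hypercyclic_of_mul_eq_one hTS
    (fun v => tendsto_pow_apply_nhds_zero <| by
      simpa using (tendsto_pow_atTop_nhds_zero_of_lt_one (norm_nonneg S) hS).mul_const ‖v‖)
    hD fun u hu => tendsto_pow_apply_nhds_zero (hDS u hu)

theorem exists_sub_mul_eq_one [CompleteSpace E] {A J W : E →L[𝕜] E} (hJW : J * W = 1)
    (h : ‖A‖ * ‖W‖ < 1) : ∃ S : E →L[𝕜] E, (A - J) * S = 1 ∧ ‖S‖ ≤ ‖W‖ / (1 - ‖A‖ * ‖W‖) := by
  have hAW : ‖A * W‖ < 1 := (norm_mul_le _ _).trans_lt h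
  let u := Units.oneSub (A * W) hAW
  refine ⟨-(W * ↑u⁻¹), ?_, ?_⟩
  · calc (A - J) * -(W * ↑u⁻¹) = (1 - A * W) * ↑u⁻¹ := by
          rw [mul_neg, ← mul_assoc, sub_mul, hJW]; noncomm_ring
      _ = 1 := u.mul_inv
  · have hinv : ‖(↑u⁻¹ : E →L[𝕜] E)‖ ≤ (1 - ‖A‖ * ‖W‖)⁻¹ :=
      calc ‖∑' n : ℕ, (A * W) ^ n‖ ≤ ‖(1 : E →L[𝕜] E)‖ - 1 + (1 - ‖A * W‖)⁻¹ :=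
            tsum_geometric_le_of_norm_lt_one _ hAW
        _ ≤ (1 - ‖A‖ * ‖W‖)⁻¹ := by
            have := ContinuousLinearMap.norm_id_le (𝕜 := 𝕜) (E := E)
            have := inv_anti₀ (sub_pos.2 h) (sub_le_sub_left (norm_mul_le A W) 1)
            simp only [ContinuousLinearMap.one_def] at *
            linarith
    rw [norm_neg, div_eq_mul_inv]
    exact (norm_mul_le _ _).trans (mul_le_mul_of_nonneg_left hinv (norm_nonneg W))

end Normed

section Filtration

variable {𝕜 E : Type*} [NontriviallyNormedField 𝕜] [NormedAddCommGroup E] [NormedSpace 𝕜 E]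

theorem pow_apply_eq_zero_of_mapsTo {F : ℕ → Submodule 𝕜 E} (hF0 : F 0 = ⊥) {J : E →L[𝕜] E}
    (hJ : ∀ k, MapsTo J (F (k + 1)) (F k)) {m n : ℕ} (hmn : m ≤ n) {u : E} (hu : u ∈ F m) :
    (J ^ n) u = 0 := by
  induction n generalizing m u with
  | zero => simpa [show m = 0 by omega, hF0] using hu
  | succ n ih =>
    rcases m with _ | m
    · rw [show u = 0 by simpa [hF0] using hu, map_zero]
    · rw [pow_succ, mul_apply_eq_comp]
      exact ih (by omega) (hJ m hu)

/-- With the weight `4 ^ k`, both halves of a step of `A - J` cost a factor `4 M`: `A` raises the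
level by one, and `J`, of norm at most `16 M`, lowers it by one. -/
theorem exists_mem_norm_pow_apply_sub_le {F : ℕ → Submodule 𝕜 E} (hmono : Monotone F)
    (hF0 : F 0 = ⊥) {A J : E →L[𝕜] E} (hA : ∀ k, MapsTo A (F k) (F (k + 1)))
    (hJ : ∀ k, MapsTo J (F (k + 1)) (F k)) {M : ℝ} (hAM : ‖A‖ ≤ M) (hJM : ‖J‖ ≤ 16 * M)
    {m : ℕ} {u : E} (hu : u ∈ F m) (n k : ℕ) :
    ∃ w ∈ F k, 4 ^ k * ‖((A - J) ^ n) u - w‖ ≤ 4 ^ m * (8 * M) ^ n * ‖u‖ := by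
  induction n generalizing k with
  | zero =>
    rcases le_or_gt k m with hkm | hmk
    · refine ⟨0, zero_mem _, ?_⟩
      simpa using mul_le_mul_of_nonneg_right (pow_le_pow_right₀ (by norm_num) hkm) (norm_nonneg u)
    · exact ⟨u, hmono hmk.le hu, by simp⟩
  | succ n ih =>
    have hA' : MapsTo A (F (k - 1)) (F k) := by
      rcases k with _ | k
      · intro x hx
        rw [hF0, SetLike.mem_coe, Submodule.mem_bot] at hx ⊢
        rw [hx, map_zero]
      · exact hA k
    obtain ⟨p, hp, hpy⟩ := ih (k - 1)
    obtain ⟨q, hq, hqy⟩ := ih (k + 1)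
    set y := ((A - J) ^ n) u
    refine ⟨A p - J q, sub_mem (hA' hp) (hJ k hq), ?_⟩
    have hsplit : ((A - J) ^ (n + 1)) u - (A p - J q) = A (y - p) - J (y - q) := by
      rw [pow_succ', mul_apply_eq_comp, sub_apply, map_sub, map_sub]; abel
    have hstep : ‖((A - J) ^ (n + 1)) u - (A p - J q)‖ ≤ M * ‖y - p‖ + 16 * M * ‖y - q‖ := by
      rw [hsplit]
      refine (norm_sub_le _ _).trans (add_le_add ?_ ?_)
      · exact (A.le_opNorm _).trans (mul_le_mul_of_nonneg_right hAM (norm_nonneg _))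
      · exact (J.le_opNorm _).trans (mul_le_mul_of_nonneg_right hJM (norm_nonneg _))
    have h4k : (4 : ℝ) ^ k ≤ 4 * 4 ^ (k - 1) := by
      rw [← pow_succ']; exact pow_le_pow_right₀ (by norm_num) (by omega)
    have hM : 0 ≤ M := (norm_nonneg A).trans hAM
    have h4k' : (4 : ℝ) ^ (k + 1) = 4 * 4 ^ k := pow_succ' 4 k
    calc 4 ^ k * ‖((A - J) ^ (n + 1)) u - (A p - J q)‖
        ≤ 4 ^ k * (M * ‖y - p‖ + 16 * M * ‖y - q‖) := by gcongr
      _ ≤ 4 * M * (4 ^ (k - 1) * ‖y - p‖) + 4 * M * (4 ^ (k + 1) * ‖y - q‖) := by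
          rw [h4k']
          nlinarith [mul_le_mul_of_nonneg_right h4k (mul_nonneg hM (norm_nonneg (y - p)))]
      _ ≤ 4 * M * (4 ^ m * (8 * M) ^ n * ‖u‖) + 4 * M * (4 ^ m * (8 * M) ^ n * ‖u‖) := by
          gcongr
      _ = 4 ^ m * (8 * M) ^ (n + 1) * ‖u‖ := by ring

theorem norm_sub_pow_apply_le {F : ℕ → Submodule 𝕜 E} (hmono : Monotone F)
    (hF0 : F 0 = ⊥) {A J : E →L[𝕜] E} (hA : ∀ k, MapsTo A (F k) (F (k + 1)))
    (hJ : ∀ k, MapsTo J (F (k + 1)) (F k)) {M : ℝ} (hAM : ‖A‖ ≤ M) (hJM : ‖J‖ ≤ 16 * M)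
    {m : ℕ} {u : E} (hu : u ∈ F m) (n : ℕ) : ‖((A - J) ^ n) u‖ ≤ 4 ^ m * (8 * M) ^ n * ‖u‖ := by
  obtain ⟨w, hw, hbound⟩ :=
    exists_mem_norm_pow_apply_sub_le hmono hF0 hA hJ hAM hJM hu n 0
  rw [hF0, Submodule.mem_bot] at hw
  simpa [hw] using hbound

variable [CompleteSpace E] [TopologicalSpace.SeparableSpace E]

theorem hypercyclic_of_mapsTo_pred {F : ℕ → Submodule 𝕜 E} (hF0 : F 0 = ⊥)
    (hdense : Dense (⋃ k, (F k : Set E))) {J W : E →L[𝕜] E}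
    (hJ : ∀ k, MapsTo J (F (k + 1)) (F k)) (hJW : J * W = 1) (hW : ‖W‖ < 1) :
    Hypercyclic J := by
  refine hypercyclic_of_mul_eq_one_of_norm_lt_one hJW hW hdense fun u hu => ?_
  obtain ⟨m, hm⟩ := mem_iUnion.1 hu
  refine tendsto_const_nhds.congr' ?_
  filter_upwards [eventually_ge_atTop m] with n hn
  rw [pow_apply_eq_zero_of_mapsTo hF0 hJ hn hm, norm_zero, mul_zero]

theorem hypercyclic_sub_of_mapsTo_succ_pred {F : ℕ → Submodule 𝕜 E} (hmono : Monotone F)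
    (hF0 : F 0 = ⊥) (hdense : Dense (⋃ k, (F k : Set E))) {A J W : E →L[𝕜] E}
    (hA : ∀ k, MapsTo A (F k) (F (k + 1))) (hJ : ∀ k, MapsTo J (F (k + 1)) (F k))
    (hJW : J * W = 1) {M : ℝ} (hM : 1 ≤ M) (hAM : ‖A‖ ≤ M) (hJM : ‖J‖ ≤ 16 * M)
    (hWM : ‖W‖ ≤ (16 * M)⁻¹) : Hypercyclic (A - J) := by
  have hAW : ‖A‖ * ‖W‖ ≤ 16⁻¹ :=
    calc ‖A‖ * ‖W‖ ≤ M * (16 * M)⁻¹ := by gcongr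
      _ = 16⁻¹ := by field_simp
  obtain ⟨S, hS, hSW⟩ := exists_sub_mul_eq_one (A := A) hJW (by linarith)
  have hS15 : ‖S‖ ≤ (15 * M)⁻¹ :=
    calc ‖S‖ ≤ (16 * M)⁻¹ / (1 - 16⁻¹) :=
          hSW.trans (div_le_div₀ (by positivity) hWM (by norm_num) (by linarith))
      _ = (15 * M)⁻¹ := by field_simp; norm_num
  have hS1 : ‖S‖ < 1 := hS15.trans_lt (inv_lt_one_of_one_lt₀ (by linarith))
  refine hypercyclic_of_mul_eq_one_of_norm_lt_one hS hS1 hdense fun u hu => ?_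
  obtain ⟨m, hm⟩ := mem_iUnion.1 hu
  have hlim : Tendsto (fun n : ℕ => 4 ^ m * ‖u‖ * (8 / 15 : ℝ) ^ n) atTop (𝓝 0) := by
    simpa using (tendsto_pow_atTop_nhds_zero_of_lt_one (by norm_num) (by norm_num)).const_mul
      (4 ^ m * ‖u‖)
  refine squeeze_zero (fun n => by positivity) (fun n => ?_) hlim
  calc ‖S‖ ^ n * ‖((A - J) ^ n) u‖ ≤ (15 * M)⁻¹ ^ n * (4 ^ m * (8 * M) ^ n * ‖u‖) := by
        gcongr
        exact norm_sub_pow_apply_le hmono hF0 hA hJ hAM hJM hm n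
    _ = 4 ^ m * ‖u‖ * (8 / 15 : ℝ) ^ n := by
        rw [show (8 / 15 : ℝ) ^ n = (15 * M)⁻¹ ^ n * (8 * M) ^ n by
          rw [← mul_pow]; congr 1; field_simp]
        ring

end Filtration

section Hilbert

variable {𝕜 E : Type*} [RCLike 𝕜] [NormedAddCommGroup E] [InnerProductSpace 𝕜 E]

theorem exists_norm_eq_one_mem_orthogonal_and_mem_sup (hE : ¬FiniteDimensional 𝕜 E)
    (K : Submodule 𝕜 E) [hK : FiniteDimensional 𝕜 K] (g : E) :
    ∃ v : E, ‖v‖ = 1 ∧ v ∈ Kᗮ ∧ g ∈ K ⊔ span 𝕜 {v} := by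
  obtain ⟨w, hwK, hw0, hgw⟩ : ∃ w ∈ Kᗮ, w ≠ 0 ∧ g - K.starProjection g ∈ span 𝕜 {w} := by
    by_cases hg : g - K.starProjection g = 0
    · have hKtop : Kᗮ ≠ ⊥ := by
        rw [Ne, orthogonal_eq_bot_iff]
        rintro rfl
        exact hE (Module.Finite.equiv topEquiv)
      obtain ⟨w, hwK, hw0⟩ := exists_mem_ne_zero_of_ne_bot hKtop
      exact ⟨w, hwK, hw0, hg ▸ zero_mem _⟩
    · exact ⟨_, K.sub_starProjection_mem_orthogonal g, hg, mem_span_singleton_self _⟩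
  refine ⟨(‖w‖⁻¹ : 𝕜) • w, norm_smul_inv_norm hw0, smul_mem _ _ hwK, ?_⟩
  rw [span_singleton_smul_eq (by simpa using hw0)]
  simpa using add_mem (mem_sup_left (K.starProjection_apply_mem g)) (mem_sup_right hgw)

noncomputable def adaptedOrthonormalSeq (hE : ¬FiniteDimensional 𝕜 E)
    (Φ : (n : ℕ) → (Fin n → E) → E) (n : ℕ) : E :=
  Classical.choose <| exists_norm_eq_one_mem_orthogonal_and_mem_sup hE
    (span 𝕜 (range fun i : Fin n => adaptedOrthonormalSeq hE Φ i))
    (hK := FiniteDimensional.span_of_finite 𝕜 (finite_range _))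
    (Φ n fun i => adaptedOrthonormalSeq hE Φ i)
termination_by n

theorem adaptedOrthonormalSeq_spec (hE : ¬FiniteDimensional 𝕜 E)
    (Φ : (n : ℕ) → (Fin n → E) → E) (n : ℕ) :
    let e := adaptedOrthonormalSeq hE Φ
    ‖e n‖ = 1 ∧ e n ∈ (span 𝕜 (e '' Iio n))ᗮ ∧ Φ n (fun i => e i) ∈ span 𝕜 (e '' Iic n) := by
  intro e
  have hrange : range (fun i : Fin n => e i) = e '' Iio n := by
    rw [← Fin.range_val, ← range_comp]; rfl
  have h := Classical.choose_spec <| exists_norm_eq_one_mem_orthogonal_and_mem_sup hE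
    (span 𝕜 (range fun i : Fin n => e i))
    (hK := FiniteDimensional.span_of_finite 𝕜 (finite_range _)) (Φ n fun i => e i)
  rw [← adaptedOrthonormalSeq, hrange] at h
  rwa [← Iio_insert, image_insert_eq, span_insert, sup_comm]

theorem exists_orthonormal_forall_mem_span_Iic (hE : ¬FiniteDimensional 𝕜 E)
    (Φ : (n : ℕ) → (Fin n → E) → E) :
    ∃ e : ℕ → E, Orthonormal 𝕜 e ∧ ∀ n, Φ n (fun i => e i) ∈ span 𝕜 (e '' Iic n) := by
  refine ⟨adaptedOrthonormalSeq hE Φ, ⟨fun i => (adaptedOrthonormalSeq_spec hE Φ i).1,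
    fun i j hij => ?_⟩, fun n => (adaptedOrthonormalSeq_spec hE Φ n).2.2⟩
  rcases hij.lt_or_gt with h | h
  · exact inner_right_of_mem_orthogonal (subset_span (mem_image_of_mem _ h))
      (adaptedOrthonormalSeq_spec hE Φ j).2.1
  · exact inner_left_of_mem_orthogonal (subset_span (mem_image_of_mem _ h))
      (adaptedOrthonormalSeq_spec hE Φ i).2.1

end Hilbert

namespace HilbertBasis

variable {ι 𝕜 E : Type*} [RCLike 𝕜] [NormedAddCommGroup E] [InnerProductSpace 𝕜 E]
  [CompleteSpace E] (b : HilbertBasis ι 𝕜 E) {σ : ι → ι} (hσ : Function.Injective σ)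

noncomputable def shift : E →ₗᵢ[𝕜] E :=
  ((b.orthonormal.comp σ hσ).orthogonalFamily.linearIsometry).comp b.repr.toLinearIsometry

theorem shift_apply_self (i : ι) : b.shift hσ (b i) = b (σ i) := by
  classical
  simp [shift, b.repr_self, OrthogonalFamily.linearIsometry_apply_single]

theorem adjoint_shift_comp_shift :
    ContinuousLinearMap.adjoint (b.shift hσ).toContinuousLinearMap ∘L
      (b.shift hσ).toContinuousLinearMap = 1 :=
  (ContinuousLinearMap.norm_map_iff_adjoint_comp_self _).1 (b.shift hσ).norm_map

theorem adjoint_shift_apply_self (i : ι) :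
    ContinuousLinearMap.adjoint (b.shift hσ).toContinuousLinearMap (b (σ i)) = b i := by
  rw [← b.shift_apply_self hσ, ← LinearIsometry.coe_toContinuousLinearMap,
    ← ContinuousLinearMap.comp_apply, adjoint_shift_comp_shift, one_apply_eq_self]

theorem adjoint_shift_apply_of_notMem_range {j : ι} (hj : j ∉ range σ) :
    ContinuousLinearMap.adjoint (b.shift hσ).toContinuousLinearMap (b j) = 0 := by
  refine b.repr.injective (lp.ext (funext fun i => ?_))
  rw [map_zero, b.repr_apply_apply, ContinuousLinearMap.adjoint_inner_right,
    LinearIsometry.coe_toContinuousLinearMap, shift_apply_self,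
    b.orthonormal.inner_eq_zero fun h => hj ⟨i, h⟩]
  rfl

end HilbertBasis

section Construction

variable {𝕜 E : Type*} [RCLike 𝕜] [NormedAddCommGroup E] [InnerProductSpace 𝕜 E]
  [CompleteSpace E]

theorem exists_hilbertBasis_adapted (hE : ¬FiniteDimensional 𝕜 E) (A : E →L[𝕜] E) {f : ℕ → E}
    (hf : DenseRange f) : ∃ b : HilbertBasis ℕ 𝕜 E,
      (∀ p, A (b p) ∈ span 𝕜 (b '' Iic (2 * p + 1))) ∧ ∀ j, f j ∈ span 𝕜 (b '' Iic (2 * j)) := by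
  obtain ⟨e, he, hΦ⟩ := exists_orthonormal_forall_mem_span_Iic hE
    fun n prev => if h : n % 2 = 1 then A (prev ⟨n / 2, by omega⟩) else f (n / 2)
  have hA : ∀ p, A (e p) ∈ span 𝕜 (e '' Iic (2 * p + 1)) := fun p => by
    simpa [Nat.add_mod, show (2 * p + 1) / 2 = p by omega] using hΦ (2 * p + 1)
  have hf' : ∀ j, f j ∈ span 𝕜 (e '' Iic (2 * j)) := fun j => by simpa using hΦ (2 * j)
  have hdense : Dense (span 𝕜 (range e) : Set E) :=
    hf.mono (range_subset_iff.2 fun j => span_mono (image_subset_range _ _) (hf' j))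
  refine ⟨HilbertBasis.mk he (dense_iff_topologicalClosure_eq_top.1 hdense).ge, ?_⟩
  simpa only [HilbertBasis.coe_mk] using ⟨hA, hf'⟩

theorem exists_filtration_and_backward_shift (hE : ¬FiniteDimensional 𝕜 E)
    [TopologicalSpace.SeparableSpace E] (A : E →L[𝕜] E) :
    ∃ (F : ℕ → Submodule 𝕜 E) (L R : E →L[𝕜] E),
      Monotone F ∧ F 0 = ⊥ ∧ Dense (⋃ k, (F k : Set E)) ∧ (∀ k, MapsTo A (F k) (F (k + 1))) ∧
      (∀ k, MapsTo L (F (k + 1)) (F k)) ∧ L * R = 1 ∧ ‖L‖ ≤ 1 ∧ ‖R‖ ≤ 1 := by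
  have : Nonempty E := ⟨0⟩
  obtain ⟨f, hf⟩ := TopologicalSpace.exists_dense_seq E
  obtain ⟨b, hbA, hbf⟩ := exists_hilbertBasis_adapted hE A hf
  have hσ : Function.Injective fun i : ℕ => 2 * i + 1 := fun i j h => by simpa using h
  let V := (b.shift hσ).toContinuousLinearMap
  let F (k : ℕ) : Submodule 𝕜 E := span 𝕜 (b '' {i | i + 1 < 2 ^ k})
  have hspan_le {T : E →L[𝕜] E} {s : Set E} {k : ℕ} (h : ∀ x ∈ s, T x ∈ F k) :
      MapsTo T (span 𝕜 s) (F k) := fun x hx =>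
    (span_le (p := (F k).comap (T : E →ₗ[𝕜] E))).2 h hx
  have hmem {i k : ℕ} (h : i + 1 < 2 ^ k) : b i ∈ F k := subset_span (mem_image_of_mem b h)
  refine ⟨F, ContinuousLinearMap.adjoint V, V, fun k l hkl => ?_, ?_, ?_, fun k => ?_,
    fun k => ?_, b.adjoint_shift_comp_shift hσ, ?_, (b.shift hσ).norm_toContinuousLinearMap_le⟩
  · exact span_mono (image_mono fun i hi => lt_of_lt_of_le hi (Nat.pow_le_pow_right two_pos hkl))
  · simp [F]
  · refine hf.mono (range_subset_iff.2 fun j => mem_iUnion.2 ⟨j + 1, ?_⟩)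
    refine span_mono (image_mono fun i hi => ?_) (hbf j)
    have := @Nat.lt_two_pow_self j
    simp only [mem_Iic] at hi
    simp only [mem_ofPred_eq, pow_succ]
    omega
  · refine hspan_le ?_
    rintro _ ⟨i, hi, rfl⟩
    refine span_mono (image_mono fun l hl => ?_) (hbA i)
    simp only [mem_Iic] at hl
    simp only [mem_ofPred_eq, pow_succ] at hi ⊢
    omega
  · refine hspan_le ?_
    rintro _ ⟨j, hj, rfl⟩
    rcases Nat.even_or_odd' j with ⟨i, rfl | rfl⟩
    · rw [b.adjoint_shift_apply_of_notMem_range hσ (by rintro ⟨l, hl⟩; simp only at hl; omega)]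
      exact zero_mem _
    · rw [b.adjoint_shift_apply_self hσ i]
      simp only [mem_ofPred_eq, pow_succ] at hj
      exact hmem (by omega)
  · rw [LinearIsometryEquiv.norm_map]
    exact (b.shift hσ).norm_toContinuousLinearMap_le

theorem exists_hypercyclic_add_eq (hE : ¬FiniteDimensional 𝕜 E)
    [TopologicalSpace.SeparableSpace E] (A : E →L[𝕜] E) :
    ∃ T₁ T₂ : E →L[𝕜] E, Hypercyclic T₁ ∧ Hypercyclic T₂ ∧ T₁ + T₂ = A := by
  obtain ⟨F, L, R, hmono, hF0, hdense, hA, hL, hLR, hL1, hR1⟩ :=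
    exists_filtration_and_backward_shift hE A
  set M := ‖A‖ + 1
  have hM : 1 ≤ M := by simp [M]
  set c : 𝕜 := ((16 * M : ℝ) : 𝕜)
  have hc : ‖c‖ = 16 * M := by simp only [c, RCLike.norm_ofReal]; exact abs_of_pos (by linarith)
  have hJ (k : ℕ) : MapsTo (c • L) (F (k + 1)) (F k) := fun x hx => smul_mem _ c (hL k hx)
  have hJW : (c • L) * (c⁻¹ • R) = 1 := by
    rw [smul_mul_smul_comm, mul_inv_cancel₀ (norm_pos_iff.1 (by rw [hc]; linarith)), one_smul,
      hLR]
  have hJM : ‖c • L‖ ≤ 16 * M := by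
    rw [norm_smul, hc]; exact mul_le_of_le_one_right (by linarith) hL1
  have hWM : ‖c⁻¹ • R‖ ≤ (16 * M)⁻¹ := by
    rw [norm_smul, norm_inv, hc]; exact mul_le_of_le_one_right (by positivity) hR1
  exact ⟨c • L, A - c • L,
    hypercyclic_of_mapsTo_pred hF0 hdense hJ hJW
      (hWM.trans_lt (inv_lt_one_of_one_lt₀ (by linarith))),
    hypercyclic_sub_of_mapsTo_succ_pred hmono hF0 hdense hA hJ hJW hM (by simp [M]) hJM hWM,
    add_sub_cancel _ _⟩

end Construction

/-- Chan's theorem: on a separable infinite-dimensional complex Hilbert space, the linear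
span of the hypercyclic operators is dense in `B(H)` in the operator norm topology. -/
theorem span_hypercyclic_dense_norm_topology {H : Type*}
    [NormedAddCommGroup H] [InnerProductSpace ℂ H] [CompleteSpace H]
    [TopologicalSpace.SeparableSpace H] (hdim : ¬FiniteDimensional ℂ H) :
    Dense (Submodule.span ℂ {T : H →L[ℂ] H | Hypercyclic T} : Set (H →L[ℂ] H)) := by
  have hspan : span ℂ {T : H →L[ℂ] H | Hypercyclic T} = ⊤ := eq_top_iff'.2 fun A => by
    obtain ⟨T₁, T₂, h₁, h₂, rfl⟩ := exists_hypercyclic_add_eq hdim A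
    exact add_mem (subset_span h₁) (subset_span h₂)
  rw [hspan, top_coe]
  exact dense_univ
end

section
/- Let T be a bounded linear operator on a complex Banach space X. Then T is Li-Yorke chaotic if and only if T admits an irregular vector, i.e. a vector x ∈ X with liminf_{n→∞} ‖T^n x‖ = 0 and limsup_{n→∞} ‖T^n x‖ = ∞. -/
/-!
An irregular vector `x` yields the uncountable scrambled set `𝕜 • x`, because
`‖Tⁿ(a • x) - Tⁿ(b • x)‖ = ‖a - b‖ ‖Tⁿ x‖`. Conversely, for a scrambled pair `u ≠ v` the vector
`y = u - v` is semi-irregular: `liminf ‖Tⁿ y‖ = 0 < limsup ‖Tⁿ y‖`. Let `Y` be the closed linear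
span of the orbit of `y`. The powers of `T` are not uniformly bounded on `Y`, since
`‖Tⁿ y‖ ≤ K ‖Tᵐ y‖` for all `m ≤ n` would give `limsup ‖Tⁿ y‖ ≤ K liminf ‖Tⁿ y‖ = 0`. By the Baire
category argument behind Banach–Steinhaus, the vectors of `Y` with unbounded orbit form a residual
set. So do the vectors `z` with `liminf ‖Tⁿ z‖ = 0`, a Gδ set containing the span of the orbit.
Any vector in both sets is irregular.
-/

open Filter Topology ENNReal

/-- `T` is Li-Yorke chaotic: it admits an uncountable scrambled set `Γ`, i.e. for all
distinct `u v ∈ Γ`, `liminf ‖Tⁿu − Tⁿv‖ = 0` and `limsup ‖Tⁿu − Tⁿv‖ > 0`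
(limits computed in `ℝ≥0∞` so that they are always well defined). -/
def LiYorkeChaotic {𝕜 X : Type*} [NontriviallyNormedField 𝕜]
    [NormedAddCommGroup X] [NormedSpace 𝕜 X] (T : X →L[𝕜] X) : Prop :=
  ∃ Γ : Set X, ¬Γ.Countable ∧
    ∀ u ∈ Γ, ∀ v ∈ Γ, u ≠ v →
      Filter.liminf (fun n : ℕ => (‖(T ^ n) u - (T ^ n) v‖₊ : ℝ≥0∞)) atTop = 0 ∧
      0 < Filter.limsup (fun n : ℕ => (‖(T ^ n) u - (T ^ n) v‖₊ : ℝ≥0∞)) atTop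

/-- `x` is an irregular vector for `T`: `liminf ‖Tⁿx‖ = 0` and `limsup ‖Tⁿx‖ = ∞`. -/
def IrregularVector {𝕜 X : Type*} [NontriviallyNormedField 𝕜]
    [NormedAddCommGroup X] [NormedSpace 𝕜 X] (T : X →L[𝕜] X) (x : X) : Prop :=
  Filter.liminf (fun n : ℕ => (‖(T ^ n) x‖₊ : ℝ≥0∞)) atTop = 0 ∧
  Filter.limsup (fun n : ℕ => (‖(T ^ n) x‖₊ : ℝ≥0∞)) atTop = ⊤

open Set
open scoped NNReal

def SemiIrregularVector {𝕜 X : Type*} [NontriviallyNormedField 𝕜]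
    [NormedAddCommGroup X] [NormedSpace 𝕜 X] (T : X →L[𝕜] X) (x : X) : Prop :=
  Filter.liminf (fun n : ℕ => (‖(T ^ n) x‖₊ : ℝ≥0∞)) atTop = 0 ∧
  0 < Filter.limsup (fun n : ℕ => (‖(T ^ n) x‖₊ : ℝ≥0∞)) atTop

namespace ENNReal

theorem liminf_eq_zero_iff_frequently_lt_inv_natCast {α : Type*} {f : Filter α}
    {u : α → ℝ≥0∞} : liminf u f = 0 ↔ ∀ k : ℕ, ∃ᶠ a in f, u a < (k : ℝ≥0∞)⁻¹ := by
  rw [← nonpos_iff_eq_zero, liminf_le_iff]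
  refine ⟨fun h k => h _ (ENNReal.inv_pos.2 (natCast_ne_top k)), fun h y hy => ?_⟩
  obtain ⟨k, hk⟩ := exists_inv_nat_lt hy.ne'
  exact (h k).mono fun a ha => ha.trans hk

theorem limsup_le_mul_liminf_of_le_mul {u : ℕ → ℝ≥0∞} {K : ℝ≥0∞} (hK : K ≠ ⊤)
    (h : ∀ m n, m ≤ n → u n ≤ K * u m) : limsup u atTop ≤ K * liminf u atTop := by
  rw [← liminf_const_mul_of_ne_top hK]
  exact le_liminf_of_le (by isBoundedDefault) (Eventually.of_forall fun m =>
    limsup_le_of_le (by isBoundedDefault) (eventually_atTop.2 ⟨m, h m⟩))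

end ENNReal

theorem bddAbove_range_norm_of_limsup_enorm_ne_top {E : Type*} [SeminormedAddCommGroup E]
    {u : ℕ → E} (h : limsup (fun n => ‖u n‖ₑ) atTop ≠ ⊤) : BddAbove (range fun n => ‖u n‖) := by
  obtain ⟨r, hr, -⟩ := ENNReal.lt_iff_exists_nnreal_btwn.1 (lt_top_iff_ne_top.2 h)
  refine IsBoundedUnder.bddAbove_range ⟨r, eventually_map.2 ?_⟩
  filter_upwards [eventually_lt_of_limsup_lt hr] with n hn
  exact (enorm_lt_coe.1 hn).le

theorem isGδ_setOf_liminf_eq_zero {X : Type*} [TopologicalSpace X] {f : ℕ → X → ℝ≥0∞}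
    (hf : ∀ n, Continuous (f n)) : IsGδ {x | liminf (fun n => f n x) atTop = 0} := by
  simp_rw [ENNReal.liminf_eq_zero_iff_frequently_lt_inv_natCast, frequently_atTop,
    ← exists_prop, ofPred_forall, ofPred_exists]
  exact .iInter fun k => .iInter fun N => IsOpen.isGδ <| isOpen_iUnion fun n =>
    isOpen_iUnion fun _ => isOpen_lt (hf n) continuous_const

section BanachSteinhaus

variable {𝕜 E F : Type*} [NontriviallyNormedField 𝕜] [NormedAddCommGroup E] [NormedSpace 𝕜 E]
  [NormedAddCommGroup F] [NormedSpace 𝕜 F]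

theorem bddAbove_range_opNorm_of_norm_apply_le_on_ball {ι : Type*} {g : ι → E →L[𝕜] F}
    {z₀ : E} {r M : ℝ} (hr : 0 < r) (h : ∀ z ∈ Metric.ball z₀ r, ∀ i, ‖g i z‖ ≤ M) :
    BddAbove (range fun i => ‖g i‖) := by
  obtain ⟨c, hc⟩ := NormedField.exists_one_lt_norm 𝕜
  refine ⟨2 * M * ‖c‖ / r, forall_mem_range.2 fun i => ?_⟩
  have hM : 0 ≤ M := (norm_nonneg _).trans (h z₀ (Metric.mem_ball_self hr) i)
  refine (g i).opNorm_le_of_shell hr (by positivity) hc fun x hx _ => ?_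
  have hx' : z₀ + x ∈ Metric.ball z₀ r := by simpa [dist_eq_norm]
  calc ‖g i x‖ = ‖g i (z₀ + x) - g i z₀‖ := by rw [map_add, add_sub_cancel_left]
    _ ≤ M + M := (norm_sub_le _ _).trans (add_le_add (h _ hx' i) (h _ (Metric.mem_ball_self hr) i))
    _ = 2 * M * ‖c‖ / r * (r / ‖c‖) := by field_simp; ring
    _ ≤ 2 * M * ‖c‖ / r * ‖x‖ := by gcongr

theorem residual_setOf_limsup_enorm_eq_top {g : ℕ → E →L[𝕜] F}
    (h : ¬BddAbove (range fun n => ‖g n‖)) :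
    {z | limsup (fun n => ‖g n z‖ₑ) atTop = ⊤} ∈ residual E := by
  set B : ℕ → Set E := fun M => {z | ∀ n, ‖g n z‖ ≤ M}
  have hB : ∀ M, IsNowhereDense (B M) := by
    intro M
    have hclosed : IsClosed (B M) := by
      simp only [B, ofPred_forall]
      exact isClosed_iInter fun n => isClosed_le (g n).continuous.norm continuous_const
    refine hclosed.isNowhereDense_iff.2 (eq_empty_iff_forall_notMem.2 fun z₀ hz₀ => h ?_)
    obtain ⟨r, hr, hball⟩ := Metric.isOpen_iff.1 isOpen_interior z₀ hz₀
    exact bddAbove_range_opNorm_of_norm_apply_le_on_ball hr fun z hz =>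
      interior_subset (hball hz)
  have hsub : {z | limsup (fun n => ‖g n z‖ₑ) atTop = ⊤}ᶜ ⊆ ⋃ M, B M := fun z hz => by
    obtain ⟨M, hM⟩ := bddAbove_range_norm_of_limsup_enorm_ne_top hz
    obtain ⟨N, hN⟩ := exists_nat_ge M
    exact mem_iUnion.2 ⟨N, fun n => (hM (mem_range_self n)).trans hN⟩
  rw [← compl_compl {z | _}]
  exact (isMeagre_iUnion fun M => (hB M).isMeagre).mono hsub

end BanachSteinhaus

section Orbits

variable {𝕜 X : Type*} [NontriviallyNormedField 𝕜] [NormedAddCommGroup X] [NormedSpace 𝕜 X]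
  {T : X →L[𝕜] X}

theorem LiYorkeChaotic.exists_semiIrregularVector (hT : LiYorkeChaotic T) :
    ∃ y, SemiIrregularVector T y := by
  obtain ⟨Γ, hΓ, hscrambled⟩ := hT
  obtain ⟨u, hu, v, hv, huv⟩ := not_subsingleton_iff.1 (mt Subsingleton.countable hΓ)
  refine ⟨u - v, ?_⟩
  simpa only [SemiIrregularVector, map_sub] using hscrambled u hu v hv huv

theorem IrregularVector.liYorkeChaotic [Uncountable 𝕜] {x : X} (hx : IrregularVector T x) :
    LiYorkeChaotic T := by
  obtain ⟨hx₀, hx_top⟩ := hx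
  simp only [← enorm_eq_nnnorm] at hx₀ hx_top
  have hx_ne : x ≠ 0 := by
    rintro rfl
    simp at hx_top
  refine ⟨range fun a : 𝕜 => a • x, fun h => not_countable (α := 𝕜) ?_, ?_⟩
  · exact countable_univ_iff.1 (by simpa using h.preimage (smul_left_injective 𝕜 hx_ne))
  rintro _ ⟨a, rfl⟩ _ ⟨b, rfl⟩ hab
  have hdist : ∀ n, (‖(T ^ n) (a • x) - (T ^ n) (b • x)‖₊ : ℝ≥0∞) = ‖a - b‖ₑ * ‖(T ^ n) x‖ₑ := by
    intro n
    rw [map_smul, map_smul, ← sub_smul, nnnorm_smul, coe_mul]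
    rfl
  have hab' : ‖a - b‖ₑ ≠ 0 := by
    simpa [sub_eq_zero] using mt (congrArg (· • x)) hab
  simp only [hdist, liminf_const_mul_of_ne_top enorm_ne_top,
    limsup_const_mul_of_ne_top enorm_ne_top, hx₀, hx_top, mul_zero, mul_top hab']
  exact ⟨trivial, zero_lt_top⟩

theorem exists_nnnorm_pow_apply_le_of_mem_span_orbit {y w : X}
    (hw : w ∈ Submodule.span 𝕜 (range fun m => (T ^ m) y)) :
    ∃ C : ℝ≥0, ∀ n, ‖(T ^ n) w‖₊ ≤ C * ‖(T ^ n) y‖₊ := by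
  induction hw using Submodule.span_induction with
  | mem w hw =>
    obtain ⟨m, rfl⟩ := hw
    refine ⟨‖T ^ m‖₊, fun n => ?_⟩
    rw [← mul_apply_eq_comp, ← pow_add, add_comm, pow_add, mul_apply_eq_comp]
    exact (T ^ m).le_opNNNorm _
  | zero => exact ⟨0, fun n => by simp⟩
  | add w₁ w₂ _ _ ih₁ ih₂ =>
    obtain ⟨C₁, hC₁⟩ := ih₁
    obtain ⟨C₂, hC₂⟩ := ih₂
    refine ⟨C₁ + C₂, fun n => ?_⟩
    rw [map_add, add_mul]
    exact (nnnorm_add_le _ _).trans (add_le_add (hC₁ n) (hC₂ n))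
  | smul a w _ ih =>
    obtain ⟨C, hC⟩ := ih
    refine ⟨‖a‖₊ * C, fun n => ?_⟩
    rw [map_smul, nnnorm_smul, mul_assoc]
    gcongr
    exact hC n

theorem liminf_enorm_pow_apply_eq_zero_of_mem_span_orbit {y w : X}
    (hy : liminf (fun n => ‖(T ^ n) y‖ₑ) atTop = 0)
    (hw : w ∈ Submodule.span 𝕜 (range fun m => (T ^ m) y)) :
    liminf (fun n => ‖(T ^ n) w‖ₑ) atTop = 0 := by
  obtain ⟨C, hC⟩ := exists_nnnorm_pow_apply_le_of_mem_span_orbit hw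
  refine le_zero_iff.1 ?_
  calc liminf (fun n => ‖(T ^ n) w‖ₑ) atTop
      ≤ liminf (fun n => (C : ℝ≥0∞) * ‖(T ^ n) y‖ₑ) atTop :=
        liminf_le_liminf (Eventually.of_forall fun n => by
          rw [enorm_eq_nnnorm, enorm_eq_nnnorm]
          exact_mod_cast hC n)
    _ = 0 := by rw [liminf_const_mul_of_ne_top coe_ne_top, hy, mul_zero]

theorem limsup_enorm_pow_apply_le_mul_liminf {Y : Submodule 𝕜 X} {y : X}
    (hY : ∀ m, (T ^ m) y ∈ Y) {K : ℝ} (hK : ∀ n, ‖(T ^ n).comp Y.subtypeL‖ ≤ K) :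
    limsup (fun n => ‖(T ^ n) y‖ₑ) atTop ≤
      ENNReal.ofReal K * liminf (fun n => ‖(T ^ n) y‖ₑ) atTop := by
  have hK₀ : 0 ≤ K := (norm_nonneg _).trans (hK 0)
  refine ENNReal.limsup_le_mul_liminf_of_le_mul ofReal_ne_top fun m n hmn => ?_
  have hpow : (T ^ n) y = (T ^ (n - m)).comp Y.subtypeL ⟨(T ^ m) y, hY m⟩ := by
    rw [← Nat.sub_add_cancel hmn, pow_add, mul_apply_eq_comp, Nat.add_sub_cancel]
    rfl
  rw [← ofReal_norm, ← ofReal_norm, ← ENNReal.ofReal_mul hK₀, hpow]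
  exact ENNReal.ofReal_le_ofReal (ContinuousLinearMap.le_of_opNorm_le _ (hK _) _)

theorem SemiIrregularVector.exists_irregularVector [CompleteSpace X] {y : X}
    (hy : SemiIrregularVector T y) : ∃ x, IrregularVector T x := by
  obtain ⟨hy₀, hy_pos⟩ := hy
  simp only [← enorm_eq_nnnorm] at hy₀ hy_pos
  set p := Submodule.span 𝕜 (range fun m => (T ^ m) y)
  set Y := p.topologicalClosure
  let g : ℕ → Y →L[𝕜] X := fun n => (T ^ n).comp Y.subtypeL
  have hD : {z : Y | liminf (fun n => ‖g n z‖ₑ) atTop = 0} ∈ residual Y := by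
    refine residual_of_dense_Gδ (isGδ_setOf_liminf_eq_zero fun n => (g n).continuous.enorm) ?_
    refine Dense.mono (s₁ := ((↑) : Y → X) ⁻¹' p)
      (fun z hz => liminf_enorm_pow_apply_eq_zero_of_mem_span_orbit hy₀ hz) ?_
    refine Subtype.dense_iff.2 (p.topologicalClosure_coe.trans_subset (closure_mono ?_))
    exact fun w hw => ⟨⟨w, p.le_topologicalClosure hw⟩, hw, rfl⟩
  have hg : ¬BddAbove (range fun n => ‖g n‖) := by
    rintro ⟨K, hK⟩
    have hY : ∀ m, (T ^ m) y ∈ Y := fun m =>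
      p.le_topologicalClosure (Submodule.subset_span ⟨m, rfl⟩)
    refine hy_pos.ne' (le_zero_iff.1 ?_)
    calc limsup (fun n => ‖(T ^ n) y‖ₑ) atTop
        ≤ ENNReal.ofReal K * liminf (fun n => ‖(T ^ n) y‖ₑ) atTop :=
          limsup_enorm_pow_apply_le_mul_liminf hY (forall_mem_range.1 hK)
      _ = 0 := by rw [hy₀, mul_zero]
  obtain ⟨z, hz₀, hz_top⟩ :=
    (dense_of_mem_residual (inter_mem hD (residual_setOf_limsup_enorm_eq_top hg))).nonempty
  exact ⟨z, hz₀, hz_top⟩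

end Orbits

/-- Bermúdez et al.: a bounded operator on a complex Banach space is Li-Yorke chaotic
iff it admits an irregular vector. -/
theorem liYorkeChaotic_iff_exists_irregularVector {X : Type*}
    [NormedAddCommGroup X] [NormedSpace ℂ X] [CompleteSpace X] (T : X →L[ℂ] X) :
    LiYorkeChaotic T ↔ ∃ x : X, IrregularVector T x := by
  have : Uncountable ℂ := Complex.ofReal_injective.uncountable
  refine ⟨fun hT => ?_, fun ⟨x, hx⟩ => hx.liYorkeChaotic⟩
  obtain ⟨y, hy⟩ := hT.exists_semiIrregularVector
  exact hy.exists_irregularVector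
end

section
/- Let T be a hypercyclic bounded linear operator on a complex Banach space X and let x be a hypercyclic vector for T. Then Γ = {λx : λ ∈ ℂ, |λ| ≤ 1} is an uncountable scrambled set for T; in particular, T is Li-Yorke chaotic. -/
/-!
Nonzero multiples of a hypercyclic vector are hypercyclic, so for `a ≠ b` the orbit of
`a • x - b • x = (a - b) • x` is dense. A dense orbit in a space without isolated points
accumulates at every point: at `0`, which forces `liminf ‖Tⁿ(a • x) - Tⁿ(b • x)‖ = 0`, and at
vectors of arbitrarily large norm, which forces the `limsup` to be `∞`. The disc of scalars is
uncountable and `λ ↦ λ • x` is injective since `x ≠ 0`.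
-/

open Filter Topology ENNReal

theorem DenseRange.mapClusterPt_atTop {X : Type*} [TopologicalSpace X] [T1Space X]
    [∀ x : X, NeBot (𝓝[≠] x)] {u : ℕ → X} (hu : DenseRange u) (y : X) :
    MapClusterPt y atTop u := by
  refine mapClusterPt_iff_frequently.2 fun s hs => frequently_atTop.2 fun N => ?_
  have htail : Dense (Set.range u \ u '' Set.Iio N) :=
    hu.sdiff_finite ((Set.finite_Iio N).image u)
  obtain ⟨_, ⟨⟨n, rfl⟩, hn⟩, hns⟩ := htail.inter_nhds_nonempty hs
  exact ⟨n, not_lt.1 fun h => hn ⟨n, h, rfl⟩, hns⟩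

section DenseSequence

variable {E : Type*} [NormedAddCommGroup E] [Nontrivial E] {u : ℕ → E}

theorem DenseRange.liminf_enorm_eq_zero (𝕜 : Type*) [NontriviallyNormedField 𝕜]
    [NormedSpace 𝕜 E] (hu : DenseRange u) : liminf (fun n => ‖u n‖ₑ) atTop = 0 := by
  have := Module.punctured_nhds_neBot 𝕜 E
  have hle := ((hu.mapClusterPt_atTop 0).tendsto_comp continuous_enorm.continuousAt).liminf_le
  simpa [Function.comp_def] using hle

theorem DenseRange.limsup_enorm_eq_top (𝕜 : Type*) [NontriviallyNormedField 𝕜]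
    [NormedSpace 𝕜 E] (hu : DenseRange u) : limsup (fun n => ‖u n‖ₑ) atTop = ∞ := by
  have := Module.punctured_nhds_neBot 𝕜 E
  refine ENNReal.eq_top_of_forall_nnreal_le fun r => ?_
  obtain ⟨y, hy⟩ := NormedSpace.exists_lt_norm 𝕜 E r
  calc (r : ℝ≥0∞) ≤ ‖y‖ₑ := by rw [enorm_eq_nnnorm]; exact_mod_cast hy.le
    _ ≤ _ := ((hu.mapClusterPt_atTop y).tendsto_comp continuous_enorm.continuousAt).le_limsup

end DenseSequence

theorem DenseRange.orbit_smul {𝕜 X : Type*} [DivisionRing 𝕜] [TopologicalSpace X]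
    [AddCommMonoid X] [Module 𝕜 X] [ContinuousConstSMul 𝕜 X] {T : X →L[𝕜] X} {x : X}
    (hx : DenseRange fun n : ℕ => (T ^ n) x) {c : 𝕜} (hc : c ≠ 0) :
    DenseRange fun n : ℕ => (T ^ n) (c • x) := by
  have horbit : (fun n : ℕ => (T ^ n) (c • x)) = (c • ·) ∘ fun n : ℕ => (T ^ n) x :=
    funext fun n => map_smul (T ^ n) c x
  rw [horbit]
  exact (Homeomorph.smulOfNeZero c hc).surjective.denseRange.comp hx (continuous_const_smul c)

theorem not_countable_closedBall {E : Type*} [NormedAddCommGroup E] [NormedSpace ℝ E]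
    [Nontrivial E] (x : E) {r : ℝ} (hr : 0 < r) : ¬(Metric.closedBall x r).Countable := fun h =>
  (Metric.nonempty_ball.2 hr).ne_empty <| by
    rw [← interior_closedBall x hr.ne']
    exact interior_eq_empty_iff_dense_compl.2 (h.dense_compl ℝ)

def IsLiYorkePair {𝕜 X : Type*} [NontriviallyNormedField 𝕜] [NormedAddCommGroup X]
    [NormedSpace 𝕜 X] (T : X →L[𝕜] X) (u v : X) : Prop :=
  liminf (fun n : ℕ => ‖(T ^ n) u - (T ^ n) v‖ₑ) atTop = 0 ∧
    0 < limsup (fun n : ℕ => ‖(T ^ n) u - (T ^ n) v‖ₑ) atTop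

theorem DenseRange.isLiYorkePair_smul {𝕜 X : Type*} [NontriviallyNormedField 𝕜]
    [NormedAddCommGroup X] [NormedSpace 𝕜 X] [Nontrivial X] {T : X →L[𝕜] X} {x : X}
    (hx : DenseRange fun n : ℕ => (T ^ n) x) {a b : 𝕜} (hab : a ≠ b) :
    IsLiYorkePair T (a • x) (b • x) := by
  have hdiff : ∀ n : ℕ, (T ^ n) (a • x) - (T ^ n) (b • x) = (T ^ n) ((a - b) • x) := fun n => by
    rw [← map_sub, sub_smul]
  have horbit := hx.orbit_smul (sub_ne_zero.2 hab)
  simp only [IsLiYorkePair, hdiff, horbit.liminf_enorm_eq_zero 𝕜,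
    horbit.limsup_enorm_eq_top 𝕜, true_and]
  exact ENNReal.zero_lt_top

theorem scrambled_set_of_hypercyclic_vector_general {X : Type*}
    [NormedAddCommGroup X] [NormedSpace ℂ X] [Nontrivial X]
    (T : X →L[ℂ] X) (x : X) (hx : Dense (Set.range fun n : ℕ => (T ^ n) x)) :
    (¬((fun lam : ℂ => lam • x) '' {lam : ℂ | ‖lam‖ ≤ 1}).Countable ∧
      ∀ u ∈ (fun lam : ℂ => lam • x) '' {lam : ℂ | ‖lam‖ ≤ 1},
        ∀ v ∈ (fun lam : ℂ => lam • x) '' {lam : ℂ | ‖lam‖ ≤ 1}, u ≠ v →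
          Filter.liminf (fun n : ℕ => (‖(T ^ n) u - (T ^ n) v‖₊ : ℝ≥0∞)) atTop = 0 ∧
          0 < Filter.limsup (fun n : ℕ => (‖(T ^ n) u - (T ^ n) v‖₊ : ℝ≥0∞)) atTop) ∧
    LiYorkeChaotic T := by
  have hx0 : x ≠ 0 := by
    rintro rfl
    simpa using DenseRange.limsup_enorm_eq_top ℂ hx
  have huncountable : ¬((fun lam : ℂ => lam • x) '' {lam : ℂ | ‖lam‖ ≤ 1}).Countable :=
    fun h => not_countable_closedBall (0 : ℂ) one_pos <| by
      simpa only [Metric.closedBall, dist_zero_right] using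
        Set.countable_of_injective_of_countable_image (smul_left_injective ℂ hx0).injOn h
  have hpairs : ∀ u ∈ (fun lam : ℂ => lam • x) '' {lam : ℂ | ‖lam‖ ≤ 1},
      ∀ v ∈ (fun lam : ℂ => lam • x) '' {lam : ℂ | ‖lam‖ ≤ 1}, u ≠ v → IsLiYorkePair T u v := by
    rintro _ ⟨a, -, rfl⟩ _ ⟨b, -, rfl⟩ huv
    exact DenseRange.isLiYorkePair_smul hx fun hab => huv (hab ▸ rfl)
  exact ⟨⟨huncountable, hpairs⟩, _, huncountable, hpairs⟩

/-- If `x` is a hypercyclic vector for a bounded operator `T` on a (nonzero) complex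
Banach space, then `Γ = {λ • x : ‖λ‖ ≤ 1}` is an uncountable scrambled set for `T`;
in particular `T` is Li-Yorke chaotic. -/
theorem scrambled_set_of_hypercyclic_vector {X : Type*}
    [NormedAddCommGroup X] [NormedSpace ℂ X] [CompleteSpace X] [Nontrivial X]
    (T : X →L[ℂ] X) (x : X) (hx : Dense (Set.range fun n : ℕ => (T ^ n) x)) :
    (¬((fun lam : ℂ => lam • x) '' {lam : ℂ | ‖lam‖ ≤ 1}).Countable ∧
      ∀ u ∈ (fun lam : ℂ => lam • x) '' {lam : ℂ | ‖lam‖ ≤ 1},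
        ∀ v ∈ (fun lam : ℂ => lam • x) '' {lam : ℂ | ‖lam‖ ≤ 1}, u ≠ v →
          Filter.liminf (fun n : ℕ => (‖(T ^ n) u - (T ^ n) v‖₊ : ℝ≥0∞)) atTop = 0 ∧
          0 < Filter.limsup (fun n : ℕ => (‖(T ^ n) u - (T ^ n) v‖₊ : ℝ≥0∞)) atTop) ∧
    LiYorkeChaotic T :=
  scrambled_set_of_hypercyclic_vector_general T x hx
end
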